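/- arXiv:1004.5311 — 14 statements merged into one kernel-verified Lean document; each statement's English description precedes it below -/
import Mathlib

section
/- Let f_n(t,u_{n-1},u_n,u_{n+1}), τ_n(t,u_n), φ_n(t,u_n) (n ∈ ℤ) be continuously differentiable real functions satisfying the determining equation for Lie point symmetries of the Volterra-type equation identically. If either ∂f_n/∂u_{n+1} is nowhere zero for every n ∈ ℤ, or ∂f_n/∂u_{n-1} is nowhere zero for every n ∈ ℤ, then τ_n(t,u_n) depends on t alone and is independent of n: there exists a single function τ(t) such that τ_n(t,u) = τ(t) for all n ∈ ℤ, t ∈ ℝ, u ∈ ℝ. -/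
/-!
The determining equation depends on `uₙ₊₂` only through `fₙ₊₁(t, uₙ, uₙ₊₁, uₙ₊₂)`, with
coefficient `∂fₙ/∂uₙ₊₁ · (τₙ(t,uₙ) − τₙ₊₁(t,uₙ₊₁))`. Since `fₙ₊₁` is not constant in `uₙ₊₂`,
this coefficient vanishes, so `τₙ(t,a) = τₙ₊₁(t,b)` for all `a, b`; symmetrically with `uₙ₋₂`
and `fₙ₋₁` under the other nondegeneracy condition. Chaining along `ℤ` makes `τₙ(t,u)` a
function of `t` alone.
-/

/-- The determining equation for Lie point symmetries of the Volterra-type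
differential–difference equation `u̇ₙ = fₙ(t, uₙ₋₁, uₙ, uₙ₊₁)`, with point-symmetry
characteristic `Qₙ = φₙ(t,uₙ) − τₙ(t,uₙ) u̇ₙ`, required to hold identically in the
independent jet variables `t, uₙ₋₂, uₙ₋₁, uₙ, uₙ₊₁, uₙ₊₂`.
The arguments of `f n` are `(t, u_{n-1}, u_n, u_{n+1})`. -/
def VolterraDetEq (f : ℤ → ℝ → ℝ → ℝ → ℝ → ℝ) (τ φ : ℤ → ℝ → ℝ → ℝ) : Prop :=
  ∀ (n : ℤ) (t um2 um1 u0 up1 up2 : ℝ),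
    (deriv (fun z => f n t z u0 up1) um1) *
        (φ (n - 1) t um1 - τ (n - 1) t um1 * f (n - 1) t um2 um1 u0) +
      (deriv (fun z => f n t um1 z up1) u0) *
        (φ n t u0 - τ n t u0 * f n t um1 u0 up1) +
      (deriv (fun z => f n t um1 u0 z) up1) *
        (φ (n + 1) t up1 - τ (n + 1) t up1 * f (n + 1) t u0 up1 up2) +
      (deriv (fun s => τ n s u0) t + deriv (fun z => τ n t z) u0 * f n t um1 u0 up1) *
        f n t um1 u0 up1 +
      τ n t u0 *
        (deriv (fun s => f n s um1 u0 up1) t +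
          ((deriv (fun z => f n t z u0 up1) um1) * f (n - 1) t um2 um1 u0 +
            (deriv (fun z => f n t um1 z up1) u0) * f n t um1 u0 up1 +
            (deriv (fun z => f n t um1 u0 z) up1) * f (n + 1) t u0 up1 up2)) -
      deriv (fun s => φ n s u0) t -
      deriv (fun z => φ n t z) u0 * f n t um1 u0 up1 = 0

lemma exists_ne_of_deriv_ne_zero {g : ℝ → ℝ} {c : ℝ} (h : deriv g c ≠ 0) :
    ∃ x y, g x ≠ g y := by
  by_contra! hconst
  have : g = fun _ => g 0 := funext fun x => hconst x 0
  exact h (by rw [this, deriv_const])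

lemma Int.forall_eq_of_forall_eq_succ {α β : Type*} {F : ℤ → α → β}
    (h : ∀ n a b, F n a = F (n + 1) b) (a₀ : α) : ∀ n a, F n a = F 0 a₀ := by
  have base : ∀ n, F n a₀ = F 0 a₀ := by
    intro n
    induction n using Int.induction_on with
    | zero => rfl
    | succ k ih => rw [← h k a₀ a₀, ih]
    | pred k ih => rw [h (-(k : ℤ) - 1) a₀ a₀, sub_add_cancel, ih]
  intro n a
  rw [h n a a₀, base]

namespace VolterraDetEq

variable {f : ℤ → ℝ → ℝ → ℝ → ℝ → ℝ} {τ φ : ℤ → ℝ → ℝ → ℝ}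

lemma forward_difference (hdet : VolterraDetEq f τ φ) (n : ℤ) (t um2 um1 u0 up1 x y : ℝ) :
    deriv (fun z => f n t um1 u0 z) up1 * (τ n t u0 - τ (n + 1) t up1) *
      (f (n + 1) t u0 up1 x - f (n + 1) t u0 up1 y) = 0 := by
  linear_combination hdet n t um2 um1 u0 up1 x - hdet n t um2 um1 u0 up1 y

lemma backward_difference (hdet : VolterraDetEq f τ φ) (n : ℤ) (t um1 u0 up1 up2 x y : ℝ) :
    deriv (fun z => f n t z u0 up1) um1 * (τ n t u0 - τ (n - 1) t um1) *
      (f (n - 1) t x um1 u0 - f (n - 1) t y um1 u0) = 0 := by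
  linear_combination hdet n t x um1 u0 up1 up2 - hdet n t y um1 u0 up1 up2

lemma tau_eq_succ_of_deriv_right_ne_zero (hdet : VolterraDetEq f τ φ)
    (hup : ∀ (n : ℤ) (t a b c : ℝ), deriv (fun z => f n t a b z) c ≠ 0) (n : ℤ) (t a b : ℝ) :
    τ n t a = τ (n + 1) t b := by
  obtain ⟨x, y, hxy⟩ := exists_ne_of_deriv_ne_zero (hup (n + 1) t a b 0)
  have hdiff := hdet.forward_difference n t 0 0 a b x y
  simpa [hup n t 0 a b, sub_eq_zero, hxy] using hdiff

lemma tau_eq_succ_of_deriv_left_ne_zero (hdet : VolterraDetEq f τ φ)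
    (hdn : ∀ (n : ℤ) (t a b c : ℝ), deriv (fun z => f n t z b c) a ≠ 0) (n : ℤ) (t a b : ℝ) :
    τ n t a = τ (n + 1) t b := by
  obtain ⟨x, y, hxy⟩ := exists_ne_of_deriv_ne_zero (hdn n t 0 a b)
  have hdiff := hdet.backward_difference (n + 1) t a b 0 0 x y
  rw [add_sub_cancel_right] at hdiff
  simpa [hdn (n + 1) t a b 0, sub_eq_zero, hxy, eq_comm] using hdiff

end VolterraDetEq

theorem volterra_tau_depends_on_t_only_general
    (f : ℤ → ℝ → ℝ → ℝ → ℝ → ℝ) (τ φ : ℤ → ℝ → ℝ → ℝ)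
    (hdet : VolterraDetEq f τ φ)
    (hnd : (∀ (n : ℤ) (t a b c : ℝ), deriv (fun z => f n t a b z) c ≠ 0) ∨
           (∀ (n : ℤ) (t a b c : ℝ), deriv (fun z => f n t z b c) a ≠ 0)) :
    ∃ τ0 : ℝ → ℝ, ∀ (n : ℤ) (t u : ℝ), τ n t u = τ0 t := by
  have shift : ∀ (n : ℤ) (t a b : ℝ), τ n t a = τ (n + 1) t b := by
    rcases hnd with hup | hdn
    · exact hdet.tau_eq_succ_of_deriv_right_ne_zero hup
    · exact hdet.tau_eq_succ_of_deriv_left_ne_zero hdn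
  exact ⟨fun t => τ 0 t 0, fun n t u =>
    Int.forall_eq_of_forall_eq_succ (F := fun n u => τ n t u) (shift · t) 0 n u⟩

/-- Theorem 3.1: for a Volterra-type equation `u̇ₙ = fₙ(t,uₙ₋₁,uₙ,uₙ₊₁)` satisfying one of
the nondegeneracy conditions, the coefficient `τₙ(t,uₙ)` of any Lie point symmetry
depends on `t` alone and is independent of `n`. -/
theorem volterra_tau_depends_on_t_only
    (f : ℤ → ℝ → ℝ → ℝ → ℝ → ℝ) (τ φ : ℤ → ℝ → ℝ → ℝ)
    (hf : ∀ n, ContDiff ℝ 1 (fun p : ℝ × ℝ × ℝ × ℝ => f n p.1 p.2.1 p.2.2.1 p.2.2.2))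
    (hτ : ∀ n, ContDiff ℝ 1 (fun p : ℝ × ℝ => τ n p.1 p.2))
    (hφ : ∀ n, ContDiff ℝ 1 (fun p : ℝ × ℝ => φ n p.1 p.2))
    (hdet : VolterraDetEq f τ φ)
    (hnd : (∀ (n : ℤ) (t a b c : ℝ), deriv (fun z => f n t a b z) c ≠ 0) ∨
           (∀ (n : ℤ) (t a b c : ℝ), deriv (fun z => f n t z b c) a ≠ 0)) :
    ∃ τ0 : ℝ → ℝ, ∀ (n : ℤ) (t u : ℝ), τ n t u = τ0 t :=
  volterra_tau_depends_on_t_only_general f τ φ hdet hnd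
end

section
/- Let k ≤ m be fixed integers with m > 0, and let f_n(t,u_{n+k},…,u_{n+m}), τ_n(t,u_n), φ_n(t,u_n) (n ∈ ℤ) be continuously differentiable real functions satisfying the determining equation for Lie point symmetries of the generalized Volterra-type equation identically. If ∂f_n/∂u_{n+m} is nowhere zero for every n ∈ ℤ, then τ_n(t,u_n) is independent of u_n, i.e. τ_n(t,u_n) = τ_n(t), and moreover τ_{n+m}(t) = τ_n(t) for all n ∈ ℤ and t ∈ ℝ (τ_n is m-periodic in n). -/
/-- The index type `{k, k+1, …, m}` of the arguments `u_{n+k}, …, u_{n+m}` of `fₙ`. -/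
abbrev ShiftIdx (k m : ℤ) : Type := {l : ℤ // l ∈ Finset.Icc k m}

/-- The tuple `(u_{j+k}, …, u_{j+m})` read off from a configuration `U : ℤ → ℝ`. -/
def shiftArg (k m : ℤ) (U : ℤ → ℝ) (j : ℤ) : ShiftIdx k m → ℝ := fun i => U (j + i.1)

/-- The partial derivative `∂f_j/∂u_{j+l}` evaluated at `(t, u_{j+k}, …, u_{j+m})`,
where the `u`'s are read off from the configuration `U : ℤ → ℝ`. -/
noncomputable def pdF (k m : ℤ) (f : ℤ → ℝ → (ShiftIdx k m → ℝ) → ℝ) (t : ℝ) (U : ℤ → ℝ)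
    (j : ℤ) (l : ShiftIdx k m) : ℝ :=
  deriv (fun z => f j t (Function.update (shiftArg k m U j) l z)) (U (j + l.1))

/-- The determining equation for Lie point symmetries of the generalized Volterra-type
equation `u̇ₙ = fₙ(t, u_{n+k}, …, u_{n+m})`, with point-symmetry characteristic
`Qₙ = φₙ(t,uₙ) − τₙ(t,uₙ) u̇ₙ`, required to hold identically in `t` and in all the
jet variables (encoded by an arbitrary configuration `U : ℤ → ℝ`). -/
def GenVolterraDetEq (k m : ℤ) (f : ℤ → ℝ → (ShiftIdx k m → ℝ) → ℝ)
    (τ φ : ℤ → ℝ → ℝ → ℝ) : Prop :=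
  ∀ (n : ℤ) (t : ℝ) (U : ℤ → ℝ),
    (∑ l : ShiftIdx k m, pdF k m f t U n l *
        (φ (n + l.1) t (U (n + l.1)) -
          τ (n + l.1) t (U (n + l.1)) * f (n + l.1) t (shiftArg k m U (n + l.1)))) +
      (deriv (fun s => τ n s (U n)) t +
          deriv (fun z => τ n t z) (U n) * f n t (shiftArg k m U n)) *
        f n t (shiftArg k m U n) +
      τ n t (U n) *
        (deriv (fun s => f n s (shiftArg k m U n)) t +
          ∑ l : ShiftIdx k m, pdF k m f t U n l * f (n + l.1) t (shiftArg k m U (n + l.1))) -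
      deriv (fun s => φ n s (U n)) t -
      deriv (fun z => φ n t z) (U n) * f n t (shiftArg k m U n) = 0

/-!
Vary the single jet variable `u_{n+2m}` in the determining equation at `n`. Since `m > 0`, it
enters only through `f_{n+m}`, and only in the two `l = m` terms, with total coefficient
`(τₙ - τ_{n+m}) ∂fₙ/∂u_{n+m}`. As `∂f_{n+m}/∂u_{n+2m} ≠ 0`, `f_{n+m}` is not constant in
`u_{n+2m}`, and `∂fₙ/∂u_{n+m} ≠ 0` then forces `τₙ(t, uₙ) = τ_{n+m}(t, u_{n+m})`. Since `uₙ` and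
`u_{n+m}` are independent variables, both sides depend on `t` alone.
-/

open Function

theorem exists_apply_ne_of_deriv_ne_zero {𝕜 E : Type*} [NontriviallyNormedField 𝕜]
    [NormedAddCommGroup E] [NormedSpace 𝕜 E] {F : 𝕜 → E} {x : 𝕜} (h : deriv F x ≠ 0) :
    ∃ z, F z ≠ F x := by
  by_contra! hconst
  rw [show F = fun _ => F x from funext hconst, deriv_const] at h
  exact h rfl

namespace ShiftIdx

variable {k m : ℤ}

def top (hkm : k ≤ m) : ShiftIdx k m := ⟨m, Finset.mem_Icc.mpr ⟨hkm, le_rfl⟩⟩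

@[simp]
theorem coe_top (hkm : k ≤ m) : (top hkm).1 = m := rfl

theorem coe_le (l : ShiftIdx k m) : l.1 ≤ m := (Finset.mem_Icc.mp l.2).2

theorem coe_lt_of_ne_top {hkm : k ≤ m} {l : ShiftIdx k m} (hl : l ≠ top hkm) : l.1 < m :=
  (coe_le l).lt_of_ne fun h => hl (Subtype.ext h)

end ShiftIdx

section Update

open ShiftIdx

variable {k m : ℤ}

theorem shiftArg_update_of_lt {j p : ℤ} (h : j + m < p) (U : ℤ → ℝ) (z : ℝ) :
    shiftArg k m (update U p z) j = shiftArg k m U j :=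
  funext fun i => update_of_ne (by have := coe_le i; omega) _ _

theorem shiftArg_update_add (hkm : k ≤ m) (U : ℤ → ℝ) (j : ℤ) (z : ℝ) :
    shiftArg k m (update U (j + m) z) j = update (shiftArg k m U j) (top hkm) z := by
  funext i
  by_cases hi : i = top hkm
  · subst hi
    simp [shiftArg]
  · rw [update_of_ne hi]
    exact update_of_ne (by have := coe_lt_of_ne_top hi; omega) _ _

theorem pdF_update_of_lt {f : ℤ → ℝ → (ShiftIdx k m → ℝ) → ℝ} {j p : ℤ} (h : j + m < p)
    (t : ℝ) (U : ℤ → ℝ) (z : ℝ) (l : ShiftIdx k m) :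
    pdF k m f t (update U p z) j l = pdF k m f t U j l := by
  have hl : j + l.1 ≠ p := by have := coe_le l; omega
  rw [pdF, pdF, shiftArg_update_of_lt h, update_of_ne hl]

theorem sum_shiftArg_update_sub (hkm : k ≤ m) (A : ShiftIdx k m → (ShiftIdx k m → ℝ) → ℝ)
    (U : ℤ → ℝ) (n : ℤ) (z w : ℝ) :
    ∑ l, A l (shiftArg k m (update U (n + m + m) z) (n + l.1)) -
        ∑ l, A l (shiftArg k m (update U (n + m + m) w) (n + l.1)) =
      A (top hkm) (update (shiftArg k m U (n + m)) (top hkm) z) -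
        A (top hkm) (update (shiftArg k m U (n + m)) (top hkm) w) := by
  have hrest : ∀ x, ∑ l ∈ {top hkm}ᶜ, A l (shiftArg k m (update U (n + m + m) x) (n + l.1)) =
      ∑ l ∈ {top hkm}ᶜ, A l (shiftArg k m U (n + l.1)) := fun x =>
    Finset.sum_congr rfl fun l hl => by
      have := coe_lt_of_ne_top (Finset.mem_compl.mp hl |> Finset.notMem_singleton.mp)
      rw [shiftArg_update_of_lt (by omega)]
  simp only [Fintype.sum_eq_add_sum_compl (top hkm), hrest, coe_top, shiftArg_update_add hkm]
  ring

end Update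

namespace GenVolterraDetEq

open ShiftIdx

variable {k m : ℤ} {f : ℤ → ℝ → (ShiftIdx k m → ℝ) → ℝ} {τ φ : ℤ → ℝ → ℝ → ℝ}

theorem tau_sub_mul_pdF_mul_sub_eq_zero (hdet : GenVolterraDetEq k m f τ φ) (hkm : k ≤ m)
    (hm : 0 < m) (n : ℤ) (t : ℝ) (U : ℤ → ℝ) (z w : ℝ) :
    (τ n t (U n) - τ (n + m) t (U (n + m))) * pdF k m f t U n (top hkm) *
        (f (n + m) t (update (shiftArg k m U (n + m)) (top hkm) z) -
          f (n + m) t (update (shiftArg k m U (n + m)) (top hkm) w)) = 0 := by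
  have hUn : ∀ x, update U (n + m + m) x n = U n := fun x => update_of_ne (by omega) _ _
  have hUl : ∀ x (l : ShiftIdx k m), update U (n + m + m) x (n + l.1) = U (n + l.1) :=
    fun x l => update_of_ne (by have := coe_le l; omega) _ _
  have hSn : ∀ x, shiftArg k m (update U (n + m + m) x) n = shiftArg k m U n :=
    fun x => shiftArg_update_of_lt (by omega) U x
  have hpd : ∀ x l, pdF k m f t (update U (n + m + m) x) n l = pdF k m f t U n l :=
    fun x l => pdF_update_of_lt (by omega) t U x l
  have hz := hdet n t (update U (n + m + m) z)
  have hw := hdet n t (update U (n + m + m) w)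
  simp only [hUn, hUl, hSn, hpd] at hz hw
  have hφτ := sum_shiftArg_update_sub hkm (fun l v => pdF k m f t U n l *
    (φ (n + l.1) t (U (n + l.1)) - τ (n + l.1) t (U (n + l.1)) * f (n + l.1) t v)) U n z w
  have hpdf := sum_shiftArg_update_sub hkm
    (fun l v => pdF k m f t U n l * f (n + l.1) t v) U n z w
  simp only [ShiftIdx.coe_top] at hφτ hpdf
  linear_combination hz - hw - hφτ - τ n t (U n) * hpdf

theorem tau_add_eq (hdet : GenVolterraDetEq k m f τ φ) (hkm : k ≤ m) (hm : 0 < m)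
    (hnd : ∀ (n : ℤ) (t : ℝ) (v : ShiftIdx k m → ℝ),
      deriv (fun z => f n t (update v (top hkm) z)) (v (top hkm)) ≠ 0)
    (n : ℤ) (t : ℝ) (U : ℤ → ℝ) : τ (n + m) t (U (n + m)) = τ n t (U n) := by
  set v := shiftArg k m U (n + m)
  obtain ⟨z, hz⟩ := exists_apply_ne_of_deriv_ne_zero (hnd (n + m) t v)
  have hpdF : pdF k m f t U n (top hkm) ≠ 0 := hnd n t (shiftArg k m U n)
  have h := hdet.tau_sub_mul_pdF_mul_sub_eq_zero hkm hm n t U z (v (top hkm))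
  rcases mul_eq_zero.mp h with h | h
  · exact (sub_eq_zero.mp ((mul_eq_zero.mp h).resolve_right hpdF)).symm
  · exact absurd (sub_eq_zero.mp h) hz

end GenVolterraDetEq

theorem genVolterra_tau_m_periodic_general (k m : ℤ) (hkm : k ≤ m) (hm : 0 < m)
    (f : ℤ → ℝ → (ShiftIdx k m → ℝ) → ℝ) (τ φ : ℤ → ℝ → ℝ → ℝ)
    (hdet : GenVolterraDetEq k m f τ φ)
    (hnd : ∀ (n : ℤ) (t : ℝ) (v : ShiftIdx k m → ℝ),
      deriv (fun z => f n t (Function.update v ⟨m, Finset.mem_Icc.mpr ⟨hkm, le_rfl⟩⟩ z))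
        (v ⟨m, Finset.mem_Icc.mpr ⟨hkm, le_rfl⟩⟩) ≠ 0) :
    (∀ (n : ℤ) (t u u' : ℝ), τ n t u = τ n t u') ∧
      (∀ (n : ℤ) (t u : ℝ), τ (n + m) t u = τ n t u) := by
  have key := hdet.tau_add_eq hkm hm hnd
  refine ⟨fun n t u u' => ?_, fun n t u => key n t fun _ => u⟩
  have hU : update (fun _ => u') n u (n + m) = u' := update_of_ne (by omega) _ _
  calc τ n t u = τ (n + m) t u' := by simpa [hU] using (key n t (update (fun _ => u') n u)).symm
    _ = τ n t u' := key n t fun _ => u'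

/-- Theorem 3.2, first case: for `u̇ₙ = fₙ(t,u_{n+k},…,u_{n+m})` with `m > 0` and
`∂fₙ/∂u_{n+m}` nowhere zero for all `n`, the symmetry coefficient `τₙ(t,uₙ)` is
independent of `uₙ` and is `m`-periodic in `n`. -/
theorem genVolterra_tau_m_periodic (k m : ℤ) (hkm : k ≤ m) (hm : 0 < m)
    (f : ℤ → ℝ → (ShiftIdx k m → ℝ) → ℝ) (τ φ : ℤ → ℝ → ℝ → ℝ)
    (hf : ∀ n, ContDiff ℝ 1 (fun p : ℝ × (ShiftIdx k m → ℝ) => f n p.1 p.2))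
    (hτ : ∀ n, ContDiff ℝ 1 (fun p : ℝ × ℝ => τ n p.1 p.2))
    (hφ : ∀ n, ContDiff ℝ 1 (fun p : ℝ × ℝ => φ n p.1 p.2))
    (hdet : GenVolterraDetEq k m f τ φ)
    (hnd : ∀ (n : ℤ) (t : ℝ) (v : ShiftIdx k m → ℝ),
      deriv (fun z => f n t (Function.update v ⟨m, Finset.mem_Icc.mpr ⟨hkm, le_rfl⟩⟩ z))
        (v ⟨m, Finset.mem_Icc.mpr ⟨hkm, le_rfl⟩⟩) ≠ 0) :
    (∀ (n : ℤ) (t u u' : ℝ), τ n t u = τ n t u') ∧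
      (∀ (n : ℤ) (t u : ℝ), τ (n + m) t u = τ n t u) :=
  genVolterra_tau_m_periodic_general k m hkm hm f τ φ hdet hnd
end

section
/- Let f_n(t,v_n,u_{n-1},u_n,u_{n+1}) be continuously differentiable and τ_n(t,u_n), φ_n(t,u_n) (n ∈ ℤ) be twice continuously differentiable real functions satisfying the second-order determining equation for Lie point symmetries of the Toda-type equation identically. If either ∂f_n/∂u_{n+1} is nowhere zero for every n ∈ ℤ, or ∂f_n/∂u_{n-1} is nowhere zero for every n ∈ ℤ, then τ_n(t,u_n) depends on t alone and is independent of n: there exists a single function τ(t) such that τ_n(t,u) = τ(t) for all n ∈ ℤ, t ∈ ℝ, u ∈ ℝ. -/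
/-- The second-order determining equation for Lie point symmetries of the Toda-type
equation `üₙ = fₙ(t, u̇ₙ, uₙ₋₁, uₙ, uₙ₊₁)`, with point-symmetry characteristic
`Qₙ = φₙ(t,uₙ) − τₙ(t,uₙ) u̇ₙ`, required to hold identically in the independent
jet variables `t, uₙ₋₁, uₙ, uₙ₊₁, vₙ₋₁, vₙ, vₙ₊₁` (the `v`'s stand for `u̇`).
The arguments of `f n` are `(t, u̇_n, u_{n-1}, u_n, u_{n+1})`. -/
def TodaTypeDetEq (f : ℤ → ℝ → ℝ → ℝ → ℝ → ℝ → ℝ) (τ φ : ℤ → ℝ → ℝ → ℝ) : Prop :=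
  ∀ (n : ℤ) (t um u0 up vm v0 vp : ℝ),
    (deriv (fun z => f n t z um u0 up) v0) *
        (deriv (fun s => φ n s u0) t +
          (deriv (fun z => φ n t z) u0 - deriv (fun s => τ n s u0) t) * v0 -
          deriv (fun z => τ n t z) u0 * v0 ^ 2) +
      ((deriv (fun z => f n t v0 z u0 up) um) *
          (φ (n - 1) t um + (τ n t u0 - τ (n - 1) t um) * vm) +
        (deriv (fun z => f n t v0 um z up) u0) *
          (φ n t u0 + (τ n t u0 - τ n t u0) * v0) +
        (deriv (fun z => f n t v0 um u0 z) up) *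
          (φ (n + 1) t up + (τ n t u0 - τ (n + 1) t up) * vp)) -
      deriv (deriv (fun s => φ n s u0)) t +
      (-2 * deriv (fun s => deriv (fun z => φ n s z) u0) t +
          deriv (deriv (fun s => τ n s u0)) t) * v0 +
      (-deriv (deriv (fun z => φ n t z)) u0 +
          2 * deriv (fun s => deriv (fun z => τ n s z) u0) t) * v0 ^ 2 +
      deriv (deriv (fun z => τ n t z)) u0 * v0 ^ 3 +
      τ n t u0 * deriv (fun s => f n s v0 um u0 up) t +
      (2 * deriv (fun s => τ n s u0) t - deriv (fun z => φ n t z) u0 +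
          3 * deriv (fun z => τ n t z) u0 * v0) * f n t v0 um u0 up = 0

/-!
The determining equation is affine in the jet variables `vₙ₋₁` and `vₙ₊₁`, with coefficients
`∂fₙ/∂uₙ₋₁ · (τₙ − τₙ₋₁)` and `∂fₙ/∂uₙ₊₁ · (τₙ − τₙ₊₁)`. Under either nondegeneracy condition
one of these factors forces `τₙ(t, a) = τₙ₊₁(t, b)` for all `n, t, a, b`, so `τₙ(t, u)` is
independent of both `u` and `n`.
-/

namespace TodaTypeDetEq

variable {f : ℤ → ℝ → ℝ → ℝ → ℝ → ℝ → ℝ} {τ φ : ℤ → ℝ → ℝ → ℝ}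

theorem deriv_up_mul_tau_sub_eq_zero (hdet : TodaTypeDetEq f τ φ) (n : ℤ) (t um u0 up v0 : ℝ) :
    deriv (fun z => f n t v0 um u0 z) up * (τ n t u0 - τ (n + 1) t up) = 0 := by
  linear_combination hdet n t um u0 up 0 v0 1 - hdet n t um u0 up 0 v0 0

theorem deriv_um_mul_tau_sub_eq_zero (hdet : TodaTypeDetEq f τ φ) (n : ℤ) (t um u0 up v0 : ℝ) :
    deriv (fun z => f n t v0 z u0 up) um * (τ n t u0 - τ (n - 1) t um) = 0 := by
  linear_combination hdet n t um u0 up 1 v0 0 - hdet n t um u0 up 0 v0 0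

end TodaTypeDetEq

theorem Int.eq_of_forall_eq_succ {α β : Type*} {g : ℤ → α → β}
    (h : ∀ m a b, g m a = g (m + 1) b) (x : α) (n : ℤ) (a : α) : g n a = g 0 x := by
  have hper : Function.Periodic (fun m => g m x) 1 := fun m => (h m x x).symm
  calc g n a = g (n + 1) x := h n a x
    _ = g 0 x := by simpa using hper.int_mul_eq (n + 1)

theorem todaType_tau_depends_on_t_only_general
    (f : ℤ → ℝ → ℝ → ℝ → ℝ → ℝ → ℝ) (τ φ : ℤ → ℝ → ℝ → ℝ)
    (hdet : TodaTypeDetEq f τ φ)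
    (hnd : (∀ (n : ℤ) (t v a b c : ℝ), deriv (fun z => f n t v a b z) c ≠ 0) ∨
           (∀ (n : ℤ) (t v a b c : ℝ), deriv (fun z => f n t v z b c) a ≠ 0)) :
    ∃ τ0 : ℝ → ℝ, ∀ (n : ℤ) (t u : ℝ), τ n t u = τ0 t := by
  have hsucc : ∀ m t a b, τ m t a = τ (m + 1) t b := by
    intro m t a b
    rcases hnd with hup | hum
    · exact sub_eq_zero.mp <| (mul_eq_zero.mp
        (hdet.deriv_up_mul_tau_sub_eq_zero m t 0 a b 0)).resolve_left (hup m t 0 0 a b)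
    · have h := (mul_eq_zero.mp
        (hdet.deriv_um_mul_tau_sub_eq_zero (m + 1) t a b 0 0)).resolve_left (hum (m + 1) t 0 a b 0)
      simpa using (sub_eq_zero.mp h).symm
  exact ⟨fun t => τ 0 t 0, fun n t u =>
    Int.eq_of_forall_eq_succ (g := fun m => τ m t) (fun m a b => hsucc m t a b) 0 n u⟩

/-- Theorem 3.3: for a Toda-type equation `üₙ = fₙ(t,u̇ₙ,uₙ₋₁,uₙ,uₙ₊₁)` satisfying one of
the nondegeneracy conditions, the coefficient `τₙ(t,uₙ)` of any Lie point symmetry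
depends on `t` alone and is independent of `n`. -/
theorem todaType_tau_depends_on_t_only
    (f : ℤ → ℝ → ℝ → ℝ → ℝ → ℝ → ℝ) (τ φ : ℤ → ℝ → ℝ → ℝ)
    (hf : ∀ n, ContDiff ℝ 1
      (fun p : ℝ × ℝ × ℝ × ℝ × ℝ => f n p.1 p.2.1 p.2.2.1 p.2.2.2.1 p.2.2.2.2))
    (hτ : ∀ n, ContDiff ℝ 2 (fun p : ℝ × ℝ => τ n p.1 p.2))
    (hφ : ∀ n, ContDiff ℝ 2 (fun p : ℝ × ℝ => φ n p.1 p.2))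
    (hdet : TodaTypeDetEq f τ φ)
    (hnd : (∀ (n : ℤ) (t v a b c : ℝ), deriv (fun z => f n t v a b z) c ≠ 0) ∨
           (∀ (n : ℤ) (t v a b c : ℝ), deriv (fun z => f n t v z b c) a ≠ 0)) :
    ∃ τ0 : ℝ → ℝ, ∀ (n : ℤ) (t u : ℝ), τ n t u = τ0 t :=
  todaType_tau_depends_on_t_only_general f τ φ hdet hnd
end

section
/- Let f_n(x,y,p_n,q_n,u_{n-1},u_n,u_{n+1}) be continuously differentiable and φ_n(x,y,u_n), ξ_n(x,y,u_n), η_n(x,y,u_n) (n ∈ ℤ) be twice continuously differentiable real functions satisfying the determining equation for Lie point symmetries of the Toda field-type equation identically. If either ∂f_n/∂u_{n-1} is nowhere zero for every n ∈ ℤ, or ∂f_n/∂u_{n+1} is nowhere zero for every n ∈ ℤ, then ξ_n and η_n depend on (x,y) alone and are independent of n: there exist functions ξ(x,y) and η(x,y) such that ξ_n(x,y,u) = ξ(x,y) and η_n(x,y,u) = η(x,y) for all n ∈ ℤ and all x, y, u ∈ ℝ. -/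
/-- The determining equation for Lie point symmetries of the Toda field-type equation
`u_{n,xy} = fₙ(x, y, u_{n,x}, u_{n,y}, uₙ₋₁, uₙ, uₙ₊₁)`, with point symmetry
`ψₙ = φₙ(x,y,uₙ) − ξₙ(x,y,uₙ) pₙ − ηₙ(x,y,uₙ) qₙ` (where `p, q, r, s` stand for the
jet variables `u_x, u_y, u_{xx}, u_{yy}`).  It expresses
`Σₖ (∂fₙ/∂uₙ₊ₖ) ψₙ₊ₖ + (∂fₙ/∂pₙ) Dₓψₙ + (∂fₙ/∂qₙ) D_yψₙ − DₓD_yψₙ = 0`,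
with `Dₓ`, `D_y` the formal total derivatives substituted on solutions
(`Dₓqₙ = D_ypₙ = fₙ`, `Dₓpₙ = rₙ`, `D_yqₙ = sₙ`), required to hold identically in the
independent jet variables `x, y, uₙ₋₁ = a, uₙ = b, uₙ₊₁ = c, pₙ₋₁, pₙ, pₙ₊₁, qₙ₋₁, qₙ,
qₙ₊₁, rₙ, sₙ`.  The arguments of `f n` are `(x, y, p_n, q_n, u_{n-1}, u_n, u_{n+1})`. -/
def TodaFieldDetEq (f : ℤ → ℝ → ℝ → ℝ → ℝ → ℝ → ℝ → ℝ → ℝ)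
    (φ ξ η : ℤ → ℝ → ℝ → ℝ → ℝ) : Prop :=
  ∀ (n : ℤ) (x y a b c pm p0 pp qm q0 qp r s : ℝ),
    -- the right-hand side of the equation and its partial derivatives at the point
    let F := f n x y p0 q0 a b c
    let fx := deriv (fun z => f n z y p0 q0 a b c) x
    let fy := deriv (fun z => f n x z p0 q0 a b c) y
    let fp := deriv (fun z => f n x y z q0 a b c) p0
    let fq := deriv (fun z => f n x y p0 z a b c) q0
    let fa := deriv (fun z => f n x y p0 q0 z b c) a
    let fb := deriv (fun z => f n x y p0 q0 a z c) b
    let fc := deriv (fun z => f n x y p0 q0 a b z) c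
    -- first and second partial derivatives of φₙ, ξₙ, ηₙ at (x, y, uₙ)
    let φx := deriv (fun z => φ n z y b) x
    let φy := deriv (fun z => φ n x z b) y
    let φu := deriv (fun z => φ n x y z) b
    let φxy := deriv (fun z => deriv (fun w => φ n z w b) y) x
    let φxu := deriv (fun z => deriv (fun w => φ n z y w) b) x
    let φyu := deriv (fun z => deriv (fun w => φ n x z w) b) y
    let φuu := deriv (deriv (fun w => φ n x y w)) b
    let ξx := deriv (fun z => ξ n z y b) x
    let ξy := deriv (fun z => ξ n x z b) y
    let ξu := deriv (fun z => ξ n x y z) b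
    let ξxy := deriv (fun z => deriv (fun w => ξ n z w b) y) x
    let ξxu := deriv (fun z => deriv (fun w => ξ n z y w) b) x
    let ξyu := deriv (fun z => deriv (fun w => ξ n x z w) b) y
    let ξuu := deriv (deriv (fun w => ξ n x y w)) b
    let ηx := deriv (fun z => η n z y b) x
    let ηy := deriv (fun z => η n x z b) y
    let ηu := deriv (fun z => η n x y z) b
    let ηxy := deriv (fun z => deriv (fun w => η n z w b) y) x
    let ηxu := deriv (fun z => deriv (fun w => η n z y w) b) x
    let ηyu := deriv (fun z => deriv (fun w => η n x z w) b) y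
    let ηuu := deriv (deriv (fun w => η n x y w)) b
    -- the symmetry characteristics ψₙ₋₁, ψₙ, ψₙ₊₁
    let ψm := φ (n - 1) x y a - ξ (n - 1) x y a * pm - η (n - 1) x y a * qm
    let ψ0 := φ n x y b - ξ n x y b * p0 - η n x y b * q0
    let ψp := φ (n + 1) x y c - ξ (n + 1) x y c * pp - η (n + 1) x y c * qp
    -- total derivatives of fₙ on solutions
    let DxF := fx + (fa * pm + fb * p0 + fc * pp) + fp * r + fq * F
    let DyF := fy + (fa * qm + fb * q0 + fc * qp) + fp * F + fq * s
    -- total derivatives of ψₙ on solutions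
    let Dxψ := φx + φu * p0 - ((ξx + ξu * p0) * p0 + ξ n x y b * r) -
      ((ηx + ηu * p0) * q0 + η n x y b * F)
    let Dyψ := φy + φu * q0 - ((ξy + ξu * q0) * p0 + ξ n x y b * F) -
      ((ηy + ηu * q0) * q0 + η n x y b * s)
    let DxDyψ := (φxy + φyu * p0 + (φxu + φuu * p0) * q0 + φu * F) -
      ((ξxy + ξyu * p0 + (ξxu + ξuu * p0) * q0 + ξu * F) * p0 + (ξy + ξu * q0) * r) -
      ((ξx + ξu * p0) * F + ξ n x y b * DxF) -
      ((ηxy + ηyu * p0 + (ηxu + ηuu * p0) * q0 + ηu * F) * q0 + (ηy + ηu * q0) * F) -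
      ((ηx + ηu * p0) * s + η n x y b * DyF)
    fa * ψm + fb * ψ0 + fc * ψp + fp * Dxψ + fq * Dyψ - DxDyψ = 0

/-! The determining equation is affine in the jet variables `p_{n±1}`, `q_{n±1}`, which enter only
through `ψ_{n±1}` and the total derivatives of `fₙ`. The coefficient of `p_{n-1}` is
`(∂fₙ/∂u_{n-1}) (ξₙ(x,y,uₙ) - ξ_{n-1}(x,y,u_{n-1}))`, and similarly for `q_{n-1}`, `p_{n+1}`,
`q_{n+1}`. Under either nondegeneracy condition this forces `ξ_{n-1}(x,y,a) = ξₙ(x,y,b)` for all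
`a`, `b`, and likewise for `η`: the coefficients depend neither on `u` nor on `n`. -/

theorem TodaFieldDetEq.deriv_prev_mul_sub_eq_zero {f : ℤ → ℝ → ℝ → ℝ → ℝ → ℝ → ℝ → ℝ → ℝ}
    {φ ξ η : ℤ → ℝ → ℝ → ℝ → ℝ} (hdet : TodaFieldDetEq f φ ξ η) (n : ℤ) (x y p q a b c : ℝ) :
    deriv (fun z => f n x y p q z b c) a * (ξ n x y b - ξ (n - 1) x y a) = 0 ∧
      deriv (fun z => f n x y p q z b c) a * (η n x y b - η (n - 1) x y a) = 0 := by
  have h₀ := hdet n x y a b c 0 p 0 0 q 0 0 0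
  have h_pm := hdet n x y a b c 1 p 0 0 q 0 0 0
  have h_qm := hdet n x y a b c 0 p 0 1 q 0 0 0
  exact ⟨by linear_combination h_pm - h₀, by linear_combination h_qm - h₀⟩

theorem TodaFieldDetEq.deriv_next_mul_sub_eq_zero {f : ℤ → ℝ → ℝ → ℝ → ℝ → ℝ → ℝ → ℝ → ℝ}
    {φ ξ η : ℤ → ℝ → ℝ → ℝ → ℝ} (hdet : TodaFieldDetEq f φ ξ η) (n : ℤ) (x y p q a b c : ℝ) :
    deriv (fun z => f n x y p q a b z) c * (ξ n x y b - ξ (n + 1) x y c) = 0 ∧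
      deriv (fun z => f n x y p q a b z) c * (η n x y b - η (n + 1) x y c) = 0 := by
  have h₀ := hdet n x y a b c 0 p 0 0 q 0 0 0
  have h_pp := hdet n x y a b c 0 p 1 0 q 0 0 0
  have h_qp := hdet n x y a b c 0 p 0 0 q 1 0 0
  exact ⟨by linear_combination h_pp - h₀, by linear_combination h_qp - h₀⟩

theorem TodaFieldDetEq.eq_succ_of_nondegenerate {f : ℤ → ℝ → ℝ → ℝ → ℝ → ℝ → ℝ → ℝ → ℝ}
    {φ ξ η : ℤ → ℝ → ℝ → ℝ → ℝ} (hdet : TodaFieldDetEq f φ ξ η)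
    (hnd : (∀ (n : ℤ) (x y p q a b c : ℝ), deriv (fun z => f n x y p q z b c) a ≠ 0) ∨
           (∀ (n : ℤ) (x y p q a b c : ℝ), deriv (fun z => f n x y p q a b z) c ≠ 0))
    (n : ℤ) (x y u v : ℝ) :
    ξ n x y u = ξ (n + 1) x y v ∧ η n x y u = η (n + 1) x y v := by
  rcases hnd with hprev | hnext
  · obtain ⟨hξ, hη⟩ := hdet.deriv_prev_mul_sub_eq_zero (n + 1) x y 0 0 u v 0
    have hfa := hprev (n + 1) x y 0 0 u v 0
    rw [add_sub_cancel_right] at hξ hη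
    exact ⟨(sub_eq_zero.1 ((mul_eq_zero.1 hξ).resolve_left hfa)).symm,
      (sub_eq_zero.1 ((mul_eq_zero.1 hη).resolve_left hfa)).symm⟩
  · obtain ⟨hξ, hη⟩ := hdet.deriv_next_mul_sub_eq_zero n x y 0 0 0 u v
    have hfc := hnext n x y 0 0 0 u v
    exact ⟨sub_eq_zero.1 ((mul_eq_zero.1 hξ).resolve_left hfc),
      sub_eq_zero.1 ((mul_eq_zero.1 hη).resolve_left hfc)⟩

theorem eq_of_forall_eq_succ {U R : Type*} {g : ℤ → U → R}
    (h : ∀ n u v, g n u = g (n + 1) v) (n m : ℤ) (u v : U) : g n u = g m v := by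
  have h_index : ∀ (u : U) (n : ℤ), g n u = g 0 u := fun u n => by
    induction n using Int.induction_on with
    | zero => rfl
    | succ k ih => rw [← h k u u, ih]
    | pred k ih => rw [h (-k - 1) u u, sub_add_cancel, ih]
  rw [h_index u, h_index v, h 0 u v, ← h 0 v v]

theorem todaField_xi_eta_depend_on_xy_only_general
    (f : ℤ → ℝ → ℝ → ℝ → ℝ → ℝ → ℝ → ℝ → ℝ) (φ ξ η : ℤ → ℝ → ℝ → ℝ → ℝ)
    (hdet : TodaFieldDetEq f φ ξ η)
    (hnd : (∀ (n : ℤ) (x y p q a b c : ℝ), deriv (fun z => f n x y p q z b c) a ≠ 0) ∨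
           (∀ (n : ℤ) (x y p q a b c : ℝ), deriv (fun z => f n x y p q a b z) c ≠ 0)) :
    ∃ (ξ0 η0 : ℝ → ℝ → ℝ), ∀ (n : ℤ) (x y u : ℝ),
      ξ n x y u = ξ0 x y ∧ η n x y u = η0 x y := by
  have hsucc := hdet.eq_succ_of_nondegenerate hnd
  refine ⟨fun x y => ξ 0 x y 0, fun x y => η 0 x y 0, fun n x y u => ⟨?_, ?_⟩⟩
  · exact eq_of_forall_eq_succ (g := fun n u => ξ n x y u)
      (fun n u v => (hsucc n x y u v).1) n 0 u 0
  · exact eq_of_forall_eq_succ (g := fun n u => η n x y u)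
      (fun n u v => (hsucc n x y u v).2) n 0 u 0

/-- Theorem 3.4: for a Toda field-type equation
`u_{n,xy} = fₙ(x,y,u_{n,x},u_{n,y},uₙ₋₁,uₙ,uₙ₊₁)` satisfying one of the nondegeneracy
conditions, the coefficients `ξₙ` and `ηₙ` of any Lie point symmetry depend on `(x,y)`
alone and are independent of `n`. -/
theorem todaField_xi_eta_depend_on_xy_only
    (f : ℤ → ℝ → ℝ → ℝ → ℝ → ℝ → ℝ → ℝ → ℝ) (φ ξ η : ℤ → ℝ → ℝ → ℝ → ℝ)
    (hf : ∀ n, ContDiff ℝ 1 (fun p : ℝ × ℝ × ℝ × ℝ × ℝ × ℝ × ℝ =>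
      f n p.1 p.2.1 p.2.2.1 p.2.2.2.1 p.2.2.2.2.1 p.2.2.2.2.2.1 p.2.2.2.2.2.2))
    (hφ : ∀ n, ContDiff ℝ 2 (fun p : ℝ × ℝ × ℝ => φ n p.1 p.2.1 p.2.2))
    (hξ : ∀ n, ContDiff ℝ 2 (fun p : ℝ × ℝ × ℝ => ξ n p.1 p.2.1 p.2.2))
    (hη : ∀ n, ContDiff ℝ 2 (fun p : ℝ × ℝ × ℝ => η n p.1 p.2.1 p.2.2))
    (hdet : TodaFieldDetEq f φ ξ η)
    (hnd : (∀ (n : ℤ) (x y p q a b c : ℝ), deriv (fun z => f n x y p q z b c) a ≠ 0) ∨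
           (∀ (n : ℤ) (x y p q a b c : ℝ), deriv (fun z => f n x y p q a b z) c ≠ 0)) :
    ∃ (ξ0 η0 : ℝ → ℝ → ℝ), ∀ (n : ℤ) (x y u : ℝ),
      ξ n x y u = ξ0 x y ∧ η n x y u = η0 x y :=
  todaField_xi_eta_depend_on_xy_only_general f φ ξ η hdet hnd
end

section
/- Let f_n(t,u_{n-1},u_n,u_{n+1}), τ_n(t,u_n), φ_n(t,u_n) (n ∈ ℤ) be continuously differentiable real functions satisfying the determining equation for Lie point symmetries of the Volterra-type equation identically. Then for all n ∈ ℤ and all real values of the jet variables the following two relations hold pointwise: (∂f_{n+1}/∂u_{n+2})(t,u_n,u_{n+1},u_{n+2}) · (∂f_n/∂u_{n+1})(t,u_{n-1},u_n,u_{n+1}) · (τ_n(t,u_n) − τ_{n+1}(t,u_{n+1})) = 0, and (∂f_{n-1}/∂u_{n-2})(t,u_{n-2},u_{n-1},u_n) · (∂f_n/∂u_{n-1})(t,u_{n-1},u_n,u_{n+1}) · (τ_n(t,u_n) − τ_{n-1}(t,u_{n-1})) = 0. -/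
theorem deriv_mul_eq_zero_of_forall_mul_sub_eq_zero {𝕜 : Type*} [NontriviallyNormedField 𝕜]
    {g : 𝕜 → 𝕜} {c a : 𝕜} (h : ∀ z, c * (g z - g a) = 0) : deriv g a * c = 0 := by
  rcases eq_or_ne c 0 with hc | hc
  · rw [hc, mul_zero]
  · have hconst : g = fun _ => g a := funext fun z => sub_eq_zero.mp <|
      (mul_eq_zero.mp (h z)).resolve_left hc
    rw [hconst, deriv_const, zero_mul]

namespace VolterraDetEq

variable {f : ℤ → ℝ → ℝ → ℝ → ℝ → ℝ} {τ φ : ℤ → ℝ → ℝ → ℝ}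

theorem mul_sub_eq_zero_of_vary_succ_succ (hdet : VolterraDetEq f τ φ)
    (n : ℤ) (t um2 um1 u0 up1 up2 z : ℝ) :
    deriv (fun z => f n t um1 u0 z) up1 * (τ n t u0 - τ (n + 1) t up1) *
      (f (n + 1) t u0 up1 z - f (n + 1) t u0 up1 up2) = 0 := by
  linear_combination hdet n t um2 um1 u0 up1 z - hdet n t um2 um1 u0 up1 up2

theorem mul_sub_eq_zero_of_vary_pred_pred (hdet : VolterraDetEq f τ φ)
    (n : ℤ) (t um2 um1 u0 up1 up2 z : ℝ) :
    deriv (fun z => f n t z u0 up1) um1 * (τ n t u0 - τ (n - 1) t um1) *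
      (f (n - 1) t z um1 u0 - f (n - 1) t um2 um1 u0) = 0 := by
  linear_combination hdet n t z um1 u0 up1 up2 - hdet n t um2 um1 u0 up1 up2

end VolterraDetEq

theorem volterra_tau_relations_general
    (f : ℤ → ℝ → ℝ → ℝ → ℝ → ℝ) (τ φ : ℤ → ℝ → ℝ → ℝ)
    (hdet : VolterraDetEq f τ φ) :
    ∀ (n : ℤ) (t um2 um1 u0 up1 up2 : ℝ),
      (deriv (fun z => f (n + 1) t u0 up1 z) up2) *
          (deriv (fun z => f n t um1 u0 z) up1) * (τ n t u0 - τ (n + 1) t up1) = 0 ∧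
      (deriv (fun z => f (n - 1) t z um1 u0) um2) *
          (deriv (fun z => f n t z u0 up1) um1) * (τ n t u0 - τ (n - 1) t um1) = 0 := by
  intro n t um2 um1 u0 up1 up2
  rw [mul_assoc, mul_assoc]
  exact ⟨deriv_mul_eq_zero_of_forall_mul_sub_eq_zero
      (hdet.mul_sub_eq_zero_of_vary_succ_succ n t um2 um1 u0 up1 up2),
    deriv_mul_eq_zero_of_forall_mul_sub_eq_zero
      (hdet.mul_sub_eq_zero_of_vary_pred_pred n t um2 um1 u0 up1 up2)⟩

/-- Eq. (3.9): differentiating the determining equation of a Volterra-type equation with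
respect to `uₙ₊₂` and to `uₙ₋₂` yields the two pointwise relations
`f_{n+1,u_{n+2}} f_{n,u_{n+1}} (τₙ − τₙ₊₁) = 0` and
`f_{n-1,u_{n-2}} f_{n,u_{n-1}} (τₙ − τₙ₋₁) = 0`. -/
theorem volterra_tau_relations
    (f : ℤ → ℝ → ℝ → ℝ → ℝ → ℝ) (τ φ : ℤ → ℝ → ℝ → ℝ)
    (hf : ∀ n, ContDiff ℝ 1 (fun p : ℝ × ℝ × ℝ × ℝ => f n p.1 p.2.1 p.2.2.1 p.2.2.2))
    (hτ : ∀ n, ContDiff ℝ 1 (fun p : ℝ × ℝ => τ n p.1 p.2))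
    (hφ : ∀ n, ContDiff ℝ 1 (fun p : ℝ × ℝ => φ n p.1 p.2))
    (hdet : VolterraDetEq f τ φ) :
    ∀ (n : ℤ) (t um2 um1 u0 up1 up2 : ℝ),
      (deriv (fun z => f (n + 1) t u0 up1 z) up2) *
          (deriv (fun z => f n t um1 u0 z) up1) * (τ n t u0 - τ (n + 1) t up1) = 0 ∧
      (deriv (fun z => f (n - 1) t z um1 u0) um2) *
          (deriv (fun z => f n t z u0 up1) um1) * (τ n t u0 - τ (n - 1) t um1) = 0 :=
  volterra_tau_relations_general f τ φ hdet
end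

section
/- Let f_n(t,v_n,u_{n-1},u_n,u_{n+1}) be continuously differentiable and τ_n(t,u_n), φ_n(t,u_n) (n ∈ ℤ) be twice continuously differentiable real functions satisfying the second-order determining equation for Lie point symmetries of the Toda-type equation identically. Then for all n ∈ ℤ and all real values of the jet variables the following relations hold pointwise: (∂f_n/∂u_{n+1})(t,v_n,u_{n-1},u_n,u_{n+1}) · (τ_n(t,u_n) − τ_{n+1}(t,u_{n+1})) = 0 and (∂f_n/∂u_{n-1})(t,v_n,u_{n-1},u_n,u_{n+1}) · (τ_n(t,u_n) − τ_{n-1}(t,u_{n-1})) = 0. -/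
namespace TodaTypeDetEq

variable {f : ℤ → ℝ → ℝ → ℝ → ℝ → ℝ → ℝ} {τ φ : ℤ → ℝ → ℝ → ℝ}

theorem deriv_up_mul_sub_eq_zero (h : TodaTypeDetEq f τ φ) (n : ℤ) (t v0 um u0 up : ℝ) :
    deriv (fun z => f n t v0 um u0 z) up * (τ n t u0 - τ (n + 1) t up) = 0 := by
  linarith [h n t um u0 up 0 v0 1, h n t um u0 up 0 v0 0]

theorem deriv_um_mul_sub_eq_zero (h : TodaTypeDetEq f τ φ) (n : ℤ) (t v0 um u0 up : ℝ) :
    deriv (fun z => f n t v0 z u0 up) um * (τ n t u0 - τ (n - 1) t um) = 0 := by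
  linarith [h n t um u0 up 1 v0 0, h n t um u0 up 0 v0 0]

end TodaTypeDetEq

theorem todaType_tau_relations_general
    (f : ℤ → ℝ → ℝ → ℝ → ℝ → ℝ → ℝ) (τ φ : ℤ → ℝ → ℝ → ℝ)
    (hdet : TodaTypeDetEq f τ φ) :
    ∀ (n : ℤ) (t v0 um u0 up : ℝ),
      (deriv (fun z => f n t v0 um u0 z) up) * (τ n t u0 - τ (n + 1) t up) = 0 ∧
      (deriv (fun z => f n t v0 z u0 up) um) * (τ n t u0 - τ (n - 1) t um) = 0 :=
  fun n t v0 um u0 up =>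
    ⟨hdet.deriv_up_mul_sub_eq_zero n t v0 um u0 up, hdet.deriv_um_mul_sub_eq_zero n t v0 um u0 up⟩

/-- Eq. (3.18): for a Toda-type equation `üₙ = fₙ(t,u̇ₙ,uₙ₋₁,uₙ,uₙ₊₁)`, setting the
coefficients of `u̇ₙ₊₁` and `u̇ₙ₋₁` in the determining equation to zero yields the
pointwise relations `f_{n,u_{n+1}}(τₙ − τₙ₊₁) = 0` and `f_{n,u_{n-1}}(τₙ − τₙ₋₁) = 0`. -/
theorem todaType_tau_relations
    (f : ℤ → ℝ → ℝ → ℝ → ℝ → ℝ → ℝ) (τ φ : ℤ → ℝ → ℝ → ℝ)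
    (hf : ∀ n, ContDiff ℝ 1
      (fun p : ℝ × ℝ × ℝ × ℝ × ℝ => f n p.1 p.2.1 p.2.2.1 p.2.2.2.1 p.2.2.2.2))
    (hτ : ∀ n, ContDiff ℝ 2 (fun p : ℝ × ℝ => τ n p.1 p.2))
    (hφ : ∀ n, ContDiff ℝ 2 (fun p : ℝ × ℝ => φ n p.1 p.2))
    (hdet : TodaTypeDetEq f τ φ) :
    ∀ (n : ℤ) (t v0 um u0 up : ℝ),
      (deriv (fun z => f n t v0 um u0 z) up) * (τ n t u0 - τ (n + 1) t up) = 0 ∧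
      (deriv (fun z => f n t v0 z u0 up) um) * (τ n t u0 - τ (n - 1) t um) = 0 :=
  todaType_tau_relations_general f τ φ hdet
end

section
/- Let f_n(x,y,p_n,q_n,u_{n-1},u_n,u_{n+1}) be continuously differentiable and φ_n(x,y,u_n), ξ_n(x,y,u_n), η_n(x,y,u_n) (n ∈ ℤ) be twice continuously differentiable real functions satisfying the determining equation for Lie point symmetries of the Toda field-type equation identically. Then for all n ∈ ℤ and all real values of the jet variables the following four relations hold pointwise: (ξ_{n-1}(x,y,u_{n-1}) − ξ_n(x,y,u_n))·∂f_n/∂u_{n-1} = 0, (η_{n-1}(x,y,u_{n-1}) − η_n(x,y,u_n))·∂f_n/∂u_{n-1} = 0, (ξ_{n+1}(x,y,u_{n+1}) − ξ_n(x,y,u_n))·∂f_n/∂u_{n+1} = 0, and (η_{n+1}(x,y,u_{n+1}) − η_n(x,y,u_n))·∂f_n/∂u_{n+1} = 0, where ∂f_n/∂u_{n±1} is evaluated at (x,y,p_n,q_n,u_{n-1},u_n,u_{n+1}). -/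
/-!
The determining equation is affine in the jet variables `pₙ₋₁, qₙ₋₁, pₙ₊₁, qₙ₊₁`: they enter
only through `ψₙ₋₁`, `ψₙ₊₁` and through the terms `ξₙ Dₓfₙ`, `ηₙ D_yfₙ` of `DₓD_yψₙ`. Since the
equation holds identically, the coefficient of each of them vanishes; it is read off as the
difference of the equation at that variable equal to `0` and to `1`, the others fixed at `0`.
-/

namespace TodaFieldDetEq

variable {f : ℤ → ℝ → ℝ → ℝ → ℝ → ℝ → ℝ → ℝ → ℝ} {φ ξ η : ℤ → ℝ → ℝ → ℝ → ℝ}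
  (hdet : TodaFieldDetEq f φ ξ η) (n : ℤ) (x y p q a b c : ℝ)
include hdet

theorem xi_pred_sub_mul_deriv_eq_zero :
    (ξ (n - 1) x y a - ξ n x y b) * deriv (fun z => f n x y p q z b c) a = 0 := by
  have h₀ := hdet n x y a b c 0 p 0 0 q 0 0 0
  have h₁ := hdet n x y a b c 1 p 0 0 q 0 0 0
  dsimp only at h₀ h₁
  linear_combination h₀ - h₁

theorem eta_pred_sub_mul_deriv_eq_zero :
    (η (n - 1) x y a - η n x y b) * deriv (fun z => f n x y p q z b c) a = 0 := by
  have h₀ := hdet n x y a b c 0 p 0 0 q 0 0 0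
  have h₁ := hdet n x y a b c 0 p 0 1 q 0 0 0
  dsimp only at h₀ h₁
  linear_combination h₀ - h₁

theorem xi_succ_sub_mul_deriv_eq_zero :
    (ξ (n + 1) x y c - ξ n x y b) * deriv (fun z => f n x y p q a b z) c = 0 := by
  have h₀ := hdet n x y a b c 0 p 0 0 q 0 0 0
  have h₁ := hdet n x y a b c 0 p 1 0 q 0 0 0
  dsimp only at h₀ h₁
  linear_combination h₀ - h₁

theorem eta_succ_sub_mul_deriv_eq_zero :
    (η (n + 1) x y c - η n x y b) * deriv (fun z => f n x y p q a b z) c = 0 := by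
  have h₀ := hdet n x y a b c 0 p 0 0 q 0 0 0
  have h₁ := hdet n x y a b c 0 p 0 0 q 1 0 0
  dsimp only at h₀ h₁
  linear_combination h₀ - h₁

end TodaFieldDetEq

theorem todaField_xi_eta_relations_general
    (f : ℤ → ℝ → ℝ → ℝ → ℝ → ℝ → ℝ → ℝ → ℝ) (φ ξ η : ℤ → ℝ → ℝ → ℝ → ℝ)
    (hdet : TodaFieldDetEq f φ ξ η) :
    ∀ (n : ℤ) (x y p q a b c : ℝ),
      (ξ (n - 1) x y a - ξ n x y b) * deriv (fun z => f n x y p q z b c) a = 0 ∧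
      (η (n - 1) x y a - η n x y b) * deriv (fun z => f n x y p q z b c) a = 0 ∧
      (ξ (n + 1) x y c - ξ n x y b) * deriv (fun z => f n x y p q a b z) c = 0 ∧
      (η (n + 1) x y c - η n x y b) * deriv (fun z => f n x y p q a b z) c = 0 :=
  fun n x y p q a b c =>
    ⟨hdet.xi_pred_sub_mul_deriv_eq_zero n x y p q a b c,
      hdet.eta_pred_sub_mul_deriv_eq_zero n x y p q a b c,
      hdet.xi_succ_sub_mul_deriv_eq_zero n x y p q a b c,
      hdet.eta_succ_sub_mul_deriv_eq_zero n x y p q a b c⟩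

/-- Eq. (3.22): for a Toda field-type equation
`u_{n,xy} = fₙ(x,y,u_{n,x},u_{n,y},uₙ₋₁,uₙ,uₙ₊₁)`, setting the coefficients of
`uₙ₋₁,ₓ`, `uₙ₋₁,_y`, `uₙ₊₁,ₓ`, `uₙ₊₁,_y` in the determining equation to zero yields the
four pointwise relations `(ξₙ₋₁ − ξₙ) f_{n,uₙ₋₁} = 0`, `(ηₙ₋₁ − ηₙ) f_{n,uₙ₋₁} = 0`,
`(ξₙ₊₁ − ξₙ) f_{n,uₙ₊₁} = 0`, `(ηₙ₊₁ − ηₙ) f_{n,uₙ₊₁} = 0`. -/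
theorem todaField_xi_eta_relations
    (f : ℤ → ℝ → ℝ → ℝ → ℝ → ℝ → ℝ → ℝ → ℝ) (φ ξ η : ℤ → ℝ → ℝ → ℝ → ℝ)
    (hf : ∀ n, ContDiff ℝ 1 (fun p : ℝ × ℝ × ℝ × ℝ × ℝ × ℝ × ℝ =>
      f n p.1 p.2.1 p.2.2.1 p.2.2.2.1 p.2.2.2.2.1 p.2.2.2.2.2.1 p.2.2.2.2.2.2))
    (hφ : ∀ n, ContDiff ℝ 2 (fun p : ℝ × ℝ × ℝ => φ n p.1 p.2.1 p.2.2))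
    (hξ : ∀ n, ContDiff ℝ 2 (fun p : ℝ × ℝ × ℝ => ξ n p.1 p.2.1 p.2.2))
    (hη : ∀ n, ContDiff ℝ 2 (fun p : ℝ × ℝ × ℝ => η n p.1 p.2.1 p.2.2))
    (hdet : TodaFieldDetEq f φ ξ η) :
    ∀ (n : ℤ) (x y p q a b c : ℝ),
      (ξ (n - 1) x y a - ξ n x y b) * deriv (fun z => f n x y p q z b c) a = 0 ∧
      (η (n - 1) x y a - η n x y b) * deriv (fun z => f n x y p q z b c) a = 0 ∧
      (ξ (n + 1) x y c - ξ n x y b) * deriv (fun z => f n x y p q a b z) c = 0 ∧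
      (η (n + 1) x y c - η n x y b) * deriv (fun z => f n x y p q a b z) c = 0 :=
  todaField_xi_eta_relations_general f φ ξ η hdet
end

section
/- Let τ(t) and φ_n(t,u) (n ∈ ℤ) be smooth real functions such that the determining equation for Lie point symmetries of the reduced YdKN equation u̇_n = u_n² u_{n+1} u_{n-1}/(u_{n+1} − u_{n-1}) holds identically (for all n ∈ ℤ and all real t, u_{n-2}, …, u_{n+2} with the denominators u_{n+1} − u_{n-1}, u_{n+2} − u_n and u_n − u_{n-2} nonzero). Then there exist constants τ₀, τ₁, a, â, b, b̂, c, ĉ such that τ(t) = τ₀ + τ₁ t and φ_n(t,u) = a_n + b_n u + c_n u², where a_n = a + â(−1)ⁿ, b_n = b + b̂(−1)ⁿ, c_n = c + ĉ(−1)ⁿ; in particular φ_n is independent of t, polynomial of degree at most 2 in u, and its coefficients are two-periodic in n. -/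
/-- The right-hand side of the reduced YdKN equation:
`fₙ(u_{n-1}, u_n, u_{n+1}) = uₙ² uₙ₊₁ uₙ₋₁ / (uₙ₊₁ − uₙ₋₁)`,
with arguments `(a, b, c) = (u_{n-1}, u_n, u_{n+1})`. -/
noncomputable def ydknF (a b c : ℝ) : ℝ := b ^ 2 * c * a / (c - a)

/-- The determining equation for Lie point symmetries of the reduced YdKN equation
`u̇ₙ = uₙ² uₙ₊₁ uₙ₋₁/(uₙ₊₁ − uₙ₋₁)`, for a commuting flow
`u_{n,λ} = φₙ(t,uₙ) − τ(t) u̇ₙ`, required to hold identically for all real values of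
the jet variables `t, uₙ₋₂, uₙ₋₁, uₙ, uₙ₊₁, uₙ₊₂` at which all the denominators
`uₙ₊₁ − uₙ₋₁`, `uₙ₊₂ − uₙ` and `uₙ − uₙ₋₂` are nonzero. -/
def YdKNDetEq (τ : ℝ → ℝ) (φ : ℤ → ℝ → ℝ → ℝ) : Prop :=
  ∀ (n : ℤ) (t um2 um1 u0 up1 up2 : ℝ),
    up1 - um1 ≠ 0 → up2 - u0 ≠ 0 → u0 - um2 ≠ 0 →
    (deriv (fun z => ydknF z u0 up1) um1) * (φ (n - 1) t um1 - τ t * ydknF um2 um1 u0) +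
      (deriv (fun z => ydknF um1 z up1) u0) * (φ n t u0 - τ t * ydknF um1 u0 up1) +
      (deriv (fun z => ydknF um1 u0 z) up1) * (φ (n + 1) t up1 - τ t * ydknF u0 up1 up2) +
      deriv τ t * ydknF um1 u0 up1 +
      τ t * ((deriv (fun z => ydknF z u0 up1) um1) * ydknF um2 um1 u0 +
          (deriv (fun z => ydknF um1 z up1) u0) * ydknF um1 u0 up1 +
          (deriv (fun z => ydknF um1 u0 z) up1) * ydknF u0 up1 up2) -
      deriv (fun s => φ n s u0) t -
      deriv (fun z => φ n t z) u0 * ydknF um1 u0 up1 = 0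


lemma ydkn_d1 (um1 u0 up1 : ℝ) (h : up1 - um1 ≠ 0) :
    deriv (fun z => ydknF z u0 up1) um1 = u0^2*up1^2/(up1-um1)^2 := by
  have h1 : HasDerivAt (fun z : ℝ => u0 ^ 2 * up1 * z / (up1 - z))
      ((u0^2*up1*1*(up1-um1) - (u0^2*up1*um1)*(0-1))/(up1-um1)^2) um1 := by
    simpa using (((hasDerivAt_id um1).const_mul (u0^2*up1)).fun_div
      ((hasDerivAt_const um1 up1).sub (hasDerivAt_id um1)) h)
  have := h1.deriv
  simp only [ydknF]
  rw [this]; field_simp; ring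

lemma ydkn_d2 (um1 u0 up1 : ℝ) :
    deriv (fun z => ydknF um1 z up1) u0 = 2*u0*up1*um1/(up1-um1) := by
  have h1 : HasDerivAt (fun z : ℝ => z ^ 2 * up1 * um1 / (up1 - um1))
      ((2*u0^(2-1)) * up1 * um1 / (up1 - um1)) u0 := by
    simpa using (((hasDerivAt_pow 2 u0).mul_const up1).mul_const um1).div_const (up1-um1)
  have := h1.deriv
  simp only [ydknF]
  rw [this]; ring

lemma ydkn_d3 (um1 u0 up1 : ℝ) (h : up1 - um1 ≠ 0) :
    deriv (fun z => ydknF um1 u0 z) up1 = -(u0^2*um1^2)/(up1-um1)^2 := by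
  have h1 : HasDerivAt (fun z : ℝ => u0 ^ 2 * z * um1 / (z - um1))
      (((u0^2*1)*um1*(up1-um1) - (u0^2*up1*um1)*(1-0))/(up1-um1)^2) up1 := by
    simpa using ((((hasDerivAt_id up1).const_mul (u0^2)).mul_const um1).fun_div
      ((hasDerivAt_id up1).sub (hasDerivAt_const up1 um1)) h)
  have := h1.deriv
  simp only [ydknF]
  rw [this]; field_simp; ring

/-- The multiplied-out determining equation. -/
lemma ydkn_keyE (τ : ℝ → ℝ) (φ : ℤ → ℝ → ℝ → ℝ) (hdet : YdKNDetEq τ φ)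
    (n : ℤ) (t x y z : ℝ) (hzx : z - x ≠ 0) :
    y^2*z^2 * φ (n-1) t x + 2*y*z*x*(z-x) * φ n t y - y^2*x^2 * φ (n+1) t z
      + (deriv τ t - deriv (fun u => φ n t u) y) * (y^2*z*x*(z-x))
      - (z-x)^2 * deriv (fun s => φ n s y) t = 0 := by
  have h := hdet n t (y-1) x y z (y+1) hzx (by ring_nf; norm_num) (by ring_nf; norm_num)
  rw [ydkn_d1 x y z hzx, ydkn_d2 x y z, ydkn_d3 x y z hzx] at h
  simp only [ydknF] at h
  have h1 : y + 1 - y = 1 := by ring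
  have h2 : y - (y - 1) = 1 := by ring
  rw [h1, h2] at h
  ring_nf at h
  rw [show -(z*x*2)+z^2+x^2 = (z-x)^2 from by ring] at h
  field_simp at h
  rw [show (-1:ℤ) + n = n - 1 from by ring, show (1:ℤ) + n = n + 1 from by ring] at h
  have key : (z-x)^3 * (y^2*z^2 * φ (n-1) t x + 2*y*z*x*(z-x) * φ n t y - y^2*x^2 * φ (n+1) t z
      + (deriv τ t - deriv (fun u => φ n t u) y) * (y^2*z*x*(z-x))
      - (z-x)^2 * deriv (fun s => φ n s y) t) = 0 := by linear_combination (z-x)^3 * h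
  rcases mul_eq_zero.1 key with h' | h'
  · exact absurd h' (pow_ne_zero 3 hzx)
  · exact h'

def ydknA (φ : ℤ → ℝ → ℝ → ℝ) (n : ℤ) (t : ℝ) : ℝ := φ n t 0
noncomputable def ydknB (φ : ℤ → ℝ → ℝ → ℝ) (n : ℤ) (t : ℝ) : ℝ := (φ n t 1 - φ n t (-1))/2
noncomputable def ydknC (φ : ℤ → ℝ → ℝ → ℝ) (n : ℤ) (t : ℝ) : ℝ := (φ n t 1 + φ n t (-1))/2 - φ n t 0

lemma ydkn_quadAux (τ : ℝ → ℝ) (φ : ℤ → ℝ → ℝ → ℝ) (hdet : YdKNDetEq τ φ)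
    (n : ℤ) (t z : ℝ) (hz : z ≠ 0) (x : ℝ) (hx : x ≠ z) :
    φ n t x = deriv (fun s => φ (n+1) s 1) t
      + ((-2*z^2*(φ (n+1) t 1) - (deriv τ t - deriv (fun u => φ (n+1) t u) 1)*z^2
          - 2*z*(deriv (fun s => φ (n+1) s 1) t))/z^2) * x
      + ((φ (n+1+1) t z + 2*z*(φ (n+1) t 1) + (deriv τ t - deriv (fun u => φ (n+1) t u) 1)*z
          + deriv (fun s => φ (n+1) s 1) t)/z^2) * x^2 := by
  have h := ydkn_keyE τ φ hdet (n+1) t x 1 z (sub_ne_zero_of_ne (Ne.symm hx))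
  rw [show n+1-1 = n from by ring] at h
  field_simp
  linear_combination h

lemma ydkn_quadRep (τ : ℝ → ℝ) (φ : ℤ → ℝ → ℝ → ℝ) (hdet : YdKNDetEq τ φ)
    (n : ℤ) (t x : ℝ) :
    φ n t x = ydknA φ n t + ydknB φ n t * x + ydknC φ n t * x^2 := by
  by_cases hx : x = 2
  · have f0 := ydkn_quadAux τ φ hdet n t 3 (by norm_num) 0 (by norm_num)
    have f1 := ydkn_quadAux τ φ hdet n t 3 (by norm_num) 1 (by norm_num)
    have fm := ydkn_quadAux τ φ hdet n t 3 (by norm_num) (-1) (by norm_num)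
    have fx := ydkn_quadAux τ φ hdet n t 3 (by norm_num) x (by rw [hx]; norm_num)
    simp only [ydknA, ydknB, ydknC]
    rw [fx, f0, f1, fm]; ring
  · have e0 := ydkn_quadAux τ φ hdet n t 2 (by norm_num) 0 (by norm_num)
    have e1 := ydkn_quadAux τ φ hdet n t 2 (by norm_num) 1 (by norm_num)
    have em := ydkn_quadAux τ φ hdet n t 2 (by norm_num) (-1) (by norm_num)
    have ex := ydkn_quadAux τ φ hdet n t 2 (by norm_num) x hx
    simp only [ydknA, ydknB, ydknC]
    rw [ex, e0, e1, em]; ring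

lemma ydkn_slice (φ : ℤ → ℝ → ℝ → ℝ) (hφ : ∀ n, ContDiff ℝ (⊤ : ℕ∞) (fun p : ℝ × ℝ => φ n p.1 p.2))
    (m : ℤ) (c : ℝ) : Differentiable ℝ (fun s => φ m s c) := by
  have h := (hφ m).differentiable (by simp)
  exact fun s => by
    have h2 : DifferentiableAt ℝ (fun x : ℝ => (x, c)) s :=
      (differentiableAt_id).prodMk (differentiableAt_const c)
    exact DifferentiableAt.comp s (h (s, c)) h2

lemma ydkn_diffA (φ : ℤ → ℝ → ℝ → ℝ) (hφ : ∀ n, ContDiff ℝ (⊤ : ℕ∞) (fun p : ℝ × ℝ => φ n p.1 p.2))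
    (m : ℤ) : Differentiable ℝ (fun s => ydknA φ m s) := ydkn_slice φ hφ m 0

lemma ydkn_diffB (φ : ℤ → ℝ → ℝ → ℝ) (hφ : ∀ n, ContDiff ℝ (⊤ : ℕ∞) (fun p : ℝ × ℝ => φ n p.1 p.2))
    (m : ℤ) : Differentiable ℝ (fun s => ydknB φ m s) :=
  ((ydkn_slice φ hφ m 1).sub (ydkn_slice φ hφ m (-1))).div_const 2

lemma ydkn_diffC (φ : ℤ → ℝ → ℝ → ℝ) (hφ : ∀ n, ContDiff ℝ (⊤ : ℕ∞) (fun p : ℝ × ℝ => φ n p.1 p.2))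
    (m : ℤ) : Differentiable ℝ (fun s => ydknC φ m s) :=
  (((ydkn_slice φ hφ m 1).add (ydkn_slice φ hφ m (-1))).div_const 2).sub (ydkn_slice φ hφ m 0)

lemma ydkn_phiu (φ : ℤ → ℝ → ℝ → ℝ)
    (hq : ∀ n t x, φ n t x = ydknA φ n t + ydknB φ n t * x + ydknC φ n t * x^2)
    (n : ℤ) (t y : ℝ) :
    deriv (fun u => φ n t u) y = ydknB φ n t + 2 * ydknC φ n t * y := by
  have hfun : (fun u => φ n t u) = fun u => ydknA φ n t + ydknB φ n t * u + ydknC φ n t * u^2 :=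
    funext fun u => hq n t u
  have H : HasDerivAt (fun u : ℝ => ydknA φ n t + ydknB φ n t * u + ydknC φ n t * u^2)
      (ydknB φ n t * 1 + ydknC φ n t * (2 * y^1)) y :=
    (((hasDerivAt_id' (x := y)).const_mul (ydknB φ n t)).const_add (ydknA φ n t)).add
      ((hasDerivAt_pow 2 y).const_mul (ydknC φ n t))
  rw [hfun, H.deriv]; ring

lemma ydkn_phit (φ : ℤ → ℝ → ℝ → ℝ) (hφ : ∀ n, ContDiff ℝ (⊤ : ℕ∞) (fun p : ℝ × ℝ => φ n p.1 p.2))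
    (hq : ∀ n t x, φ n t x = ydknA φ n t + ydknB φ n t * x + ydknC φ n t * x^2)
    (n : ℤ) (t y : ℝ) :
    deriv (fun s => φ n s y) t = deriv (fun s => ydknA φ n s) t
      + deriv (fun s => ydknB φ n s) t * y + deriv (fun s => ydknC φ n s) t * y^2 := by
  have hfun : (fun s => φ n s y)
      = fun s => ydknA φ n s + ydknB φ n s * y + ydknC φ n s * y^2 :=
    funext fun s => hq n s y
  have H : HasDerivAt (fun s => ydknA φ n s + ydknB φ n s * y + ydknC φ n s * y^2)
      (deriv (fun s => ydknA φ n s) t + deriv (fun s => ydknB φ n s) t * y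
        + deriv (fun s => ydknC φ n s) t * y^2) t :=
    ((((ydkn_diffA φ hφ n) t).hasDerivAt.add
      (((ydkn_diffB φ hφ n) t).hasDerivAt.mul_const y)).add
      (((ydkn_diffC φ hφ n) t).hasDerivAt.mul_const (y^2)))
  rw [hfun, H.deriv]

lemma ydkn_S1 (τ : ℝ → ℝ) (φ : ℤ → ℝ → ℝ → ℝ) (hdet : YdKNDetEq τ φ)
    (hφ : ∀ n, ContDiff ℝ (⊤ : ℕ∞) (fun p : ℝ × ℝ => φ n p.1 p.2)) (n : ℤ) (t : ℝ) :
    deriv (fun s => ydknA φ n s) t = 0 ∧ deriv (fun s => ydknB φ n s) t = 0 ∧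
      deriv (fun s => ydknC φ n s) t = ydknA φ (n-1) t := by
  have hq : ∀ n t x, φ n t x = ydknA φ n t + ydknB φ n t * x + ydknC φ n t * x^2 :=
    fun n t x => ydkn_quadRep τ φ hdet n t x
  have h0 := ydkn_keyE τ φ hdet n t 0 0 1 (by norm_num)
  have h1 := ydkn_keyE τ φ hdet n t 0 1 1 (by norm_num)
  have hm := ydkn_keyE τ φ hdet n t 0 (-1) 1 (by norm_num)
  rw [ydkn_phit φ hφ hq n t 0, show φ (n-1) t 0 = ydknA φ (n-1) t from rfl] at h0
  rw [ydkn_phit φ hφ hq n t 1, show φ (n-1) t 0 = ydknA φ (n-1) t from rfl] at h1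
  rw [ydkn_phit φ hφ hq n t (-1), show φ (n-1) t 0 = ydknA φ (n-1) t from rfl] at hm
  ring_nf at h0 h1 hm
  simp only [show (-1:ℤ)+n = n-1 from by ring, show (1:ℤ)+n = n+1 from by ring] at *
  refine ⟨by linarith, by linarith, by linarith⟩

lemma ydkn_S2 (τ : ℝ → ℝ) (φ : ℤ → ℝ → ℝ → ℝ) (hdet : YdKNDetEq τ φ)
    (hφ : ∀ n, ContDiff ℝ (⊤ : ℕ∞) (fun p : ℝ × ℝ => φ n p.1 p.2))
    (n : ℤ) (t : ℝ) : ydknA φ n t = 0 := by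
  have hq : ∀ n t x, φ n t x = ydknA φ n t + ydknB φ n t * x + ydknC φ n t * x^2 :=
    fun n t x => ydkn_quadRep τ φ hdet n t x
  obtain ⟨s1, s2, s3⟩ := ydkn_S1 τ φ hdet hφ n t
  have h1 := ydkn_keyE τ φ hdet n t 1 1 (-1) (by norm_num)
  have h2 := ydkn_keyE τ φ hdet n t 1 (-1) (-1) (by norm_num)
  rw [hq (n-1) t 1, hq n t 1, hq (n+1) t (-1), ydkn_phiu φ hq n t 1,
    ydkn_phit φ hφ hq n t 1] at h1
  rw [hq (n-1) t 1, hq n t (-1), hq (n+1) t (-1), ydkn_phiu φ hq n t (-1),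
    ydkn_phit φ hφ hq n t (-1)] at h2
  ring_nf at h1 h2
  simp only [show (-1:ℤ)+n = n-1 from by ring, show (1:ℤ)+n = n+1 from by ring] at *
  linarith

lemma ydkn_S4 (τ : ℝ → ℝ) (φ : ℤ → ℝ → ℝ → ℝ) (hdet : YdKNDetEq τ φ)
    (hφ : ∀ n, ContDiff ℝ (⊤ : ℕ∞) (fun p : ℝ × ℝ => φ n p.1 p.2)) (n : ℤ) (t : ℝ) :
    ydknC φ (n+1) t = ydknC φ (n-1) t ∧ ydknB φ (n+1) t = ydknB φ (n-1) t ∧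
      ydknB φ (n-1) t + ydknB φ n t + deriv τ t = 0 := by
  have hq : ∀ n t x, φ n t x = ydknA φ n t + ydknB φ n t * x + ydknC φ n t * x^2 :=
    fun n t x => ydkn_quadRep τ φ hdet n t x
  obtain ⟨s1, s2, s3⟩ := ydkn_S1 τ φ hdet hφ n t
  have a0 := ydkn_S2 τ φ hdet hφ n t
  have am := ydkn_S2 τ φ hdet hφ (n-1) t
  have ap := ydkn_S2 τ φ hdet hφ (n+1) t
  have h1 := ydkn_keyE τ φ hdet n t 1 1 2 (by norm_num)
  have h2 := ydkn_keyE τ φ hdet n t 2 1 1 (by norm_num)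
  have h3 := ydkn_keyE τ φ hdet n t 1 1 (-1) (by norm_num)
  have h4 := ydkn_keyE τ φ hdet n t 1 1 3 (by norm_num)
  rw [hq (n-1) t 1, hq n t 1, hq (n+1) t 2, ydkn_phiu φ hq n t 1,
    ydkn_phit φ hφ hq n t 1] at h1
  rw [hq (n-1) t 2, hq n t 1, hq (n+1) t 1, ydkn_phiu φ hq n t 1,
    ydkn_phit φ hφ hq n t 1] at h2
  rw [hq (n-1) t 1, hq n t 1, hq (n+1) t (-1), ydkn_phiu φ hq n t 1,
    ydkn_phit φ hφ hq n t 1] at h3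
  rw [hq (n-1) t 1, hq n t 1, hq (n+1) t 3, ydkn_phiu φ hq n t 1,
    ydkn_phit φ hφ hq n t 1] at h4
  ring_nf at h1 h2 h3 h4
  simp only [show (-1:ℤ)+n = n-1 from by ring, show (1:ℤ)+n = n+1 from by ring] at *
  refine ⟨by linarith, by linarith, by linarith⟩

/-- Eq. (4.6): any Lie point symmetry of the reduced YdKN equation
`u̇ₙ = uₙ² uₙ₊₁ uₙ₋₁/(uₙ₊₁ − uₙ₋₁)` has `τ = τ₀ + τ₁ t` and
`φₙ = aₙ + bₙ uₙ + cₙ uₙ²` with coefficients `aₙ = a + â(−1)ⁿ`, `bₙ = b + b̂(−1)ⁿ`,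
`cₙ = c + ĉ(−1)ⁿ` two-periodic in `n`. -/
theorem ydkn_symmetry_coefficients
    (τ : ℝ → ℝ) (φ : ℤ → ℝ → ℝ → ℝ)
    (hτ : ContDiff ℝ (⊤ : ℕ∞) τ)
    (hφ : ∀ n, ContDiff ℝ (⊤ : ℕ∞) (fun p : ℝ × ℝ => φ n p.1 p.2))
    (hdet : YdKNDetEq τ φ) :
    ∃ τ0 τ1 a ah b bh c ch : ℝ,
      (∀ t : ℝ, τ t = τ0 + τ1 * t) ∧
      (∀ (n : ℤ) (t u : ℝ), φ n t u =
        (a + ah * (-1 : ℝ) ^ n) + (b + bh * (-1 : ℝ) ^ n) * u +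
          (c + ch * (-1 : ℝ) ^ n) * u ^ 2) := by
  have hq : ∀ n t x, φ n t x = ydknA φ n t + ydknB φ n t * x + ydknC φ n t * x^2 :=
    fun n t x => ydkn_quadRep τ φ hdet n t x
  have hA := ydkn_S2 τ φ hdet hφ
  have hBconst : ∀ n t, ydknB φ n t = ydknB φ n 0 := fun n t =>
    is_const_of_deriv_eq_zero (ydkn_diffB φ hφ n)
      (fun s => (ydkn_S1 τ φ hdet hφ n s).2.1) t 0
  have hCconst : ∀ n t, ydknC φ n t = ydknC φ n 0 := fun n t =>
    is_const_of_deriv_eq_zero (ydkn_diffC φ hφ n)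
      (fun s => by rw [(ydkn_S1 τ φ hdet hφ n s).2.2, hA (n-1) s]) t 0
  have hDτ : ∀ t, deriv τ t = -(ydknB φ 0 0 + ydknB φ 1 0) := by
    intro t
    have h := (ydkn_S4 τ φ hdet hφ 1 t).2.2
    rw [show (1:ℤ)-1 = 0 from by ring, hBconst 0 t, hBconst 1 t] at h
    linarith
  have hτaff : ∀ t, τ t = τ 0 + (-(ydknB φ 0 0 + ydknB φ 1 0)) * t := by
    intro t
    have hd : Differentiable ℝ (fun t => τ t - (-(ydknB φ 0 0 + ydknB φ 1 0)) * t) :=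
      (hτ.differentiable (by simp)).sub (differentiable_id.const_mul _)
    have hz : ∀ s, deriv (fun t => τ t - (-(ydknB φ 0 0 + ydknB φ 1 0)) * t) s = 0 := by
      intro s
      have hder : HasDerivAt (fun t => τ t - (-(ydknB φ 0 0 + ydknB φ 1 0)) * t)
          (deriv τ s - (-(ydknB φ 0 0 + ydknB φ 1 0)) * 1) s :=
        ((hτ.differentiable (by simp)) s).hasDerivAt.sub
          ((hasDerivAt_id' (x := s)).const_mul _)
      rw [hder.deriv, hDτ s]; ring
    have h := is_const_of_deriv_eq_zero hd hz t 0
    simp only [mul_zero, sub_zero, mul_comm] at h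
    linarith [h]
  have hBrec : ∀ n : ℤ, ydknB φ n 0 + ydknB φ (n+1) 0 = ydknB φ 0 0 + ydknB φ 1 0 := by
    intro n
    have h := (ydkn_S4 τ φ hdet hφ (n+1) 0).2.2
    rw [show n+1-1 = n from by ring] at h
    have h2 := hDτ 0
    linarith
  have hC2 : ∀ n : ℤ, ydknC φ (n+2) 0 = ydknC φ n 0 := by
    intro n
    have h := (ydkn_S4 τ φ hdet hφ (n+1) 0).1
    rw [show n+1+1 = n+2 from by ring, show n+1-1 = n from by ring] at h
    exact h
  have hneg : ∀ m : ℤ, (-1:ℝ)^(m+1) = -(-1:ℝ)^m := fun m => by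
    rw [zpow_add_one₀ (by norm_num : (-1:ℝ) ≠ 0)]; ring
  have hneg' : ∀ m : ℤ, (-1:ℝ)^(m-1) = -(-1:ℝ)^m := fun m => by
    rw [zpow_sub_one₀ (by norm_num : (-1:ℝ) ≠ 0)]; norm_num
  have hB : ∀ n : ℤ, ydknB φ n 0 =
      (ydknB φ 0 0 + ydknB φ 1 0)/2 + (ydknB φ 0 0 - ydknB φ 1 0)/2 * (-1:ℝ)^n := by
    intro n
    induction n using Int.induction_on with
    | zero => rw [zpow_zero]; ring
    | succ i ih =>
      rw [hneg (i:ℤ)]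
      have h := hBrec (i:ℤ)
      linarith
    | pred i ih =>
      rw [hneg' (-(i:ℤ))]
      have h := hBrec (-(i:ℤ)-1)
      rw [show -(i:ℤ)-1+1 = -(i:ℤ) from by ring] at h
      linarith
  have hC : ∀ n : ℤ, (ydknC φ n 0 =
      (ydknC φ 0 0 + ydknC φ 1 0)/2 + (ydknC φ 0 0 - ydknC φ 1 0)/2 * (-1:ℝ)^n) ∧
      (ydknC φ (n+1) 0 =
      (ydknC φ 0 0 + ydknC φ 1 0)/2 + (ydknC φ 0 0 - ydknC φ 1 0)/2 * (-1:ℝ)^(n+1)) := by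
    intro n
    induction n using Int.induction_on with
    | zero =>
      constructor
      · rw [zpow_zero]; ring
      · rw [zero_add, zpow_one]; ring
    | succ i ih =>
      refine ⟨ih.2, ?_⟩
      have h := hC2 (i:ℤ)
      rw [show (i:ℤ)+2 = (i:ℤ)+1+1 from by ring] at h
      rw [hneg ((i:ℤ)+1), hneg (i:ℤ)]
      linarith [ih.1]
    | pred i ih =>
      constructor
      · have h := hC2 (-(i:ℤ)-1)
        rw [show -(i:ℤ)-1+2 = -(i:ℤ)+1 from by ring] at h
        rw [hneg' (-(i:ℤ))]
        have h2 := ih.2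
        rw [hneg (-(i:ℤ))] at h2
        linarith
      · rw [show -(i:ℤ)-1+1 = -(i:ℤ) from by ring]
        exact ih.1
  refine ⟨τ 0, -(ydknB φ 0 0 + ydknB φ 1 0), 0, 0,
    (ydknB φ 0 0 + ydknB φ 1 0)/2, (ydknB φ 0 0 - ydknB φ 1 0)/2,
    (ydknC φ 0 0 + ydknC φ 1 0)/2, (ydknC φ 0 0 - ydknC φ 1 0)/2, hτaff, ?_⟩
  intro n t u
  rw [hq n t u, hA n t, hBconst n t, hCconst n t, hB n, (hC n).1]
  ring
end

section
/- Let τ(t) and φ_n(t,u) (n ∈ ℤ) be smooth real functions. The determining equation for Lie point symmetries of the reduced YdKN equation u̇_n = u_n² u_{n+1} u_{n-1}/(u_{n+1} − u_{n-1}) holds identically (for all n ∈ ℤ and all real t, u_{n-2}, …, u_{n+2} with the denominators u_{n+1} − u_{n-1}, u_{n+2} − u_n and u_n − u_{n-2} nonzero) if and only if there exist constants c₁, c₂, c₃, c₄, c₅ such that τ(t) = c₁ + c₄ t and φ_n(t,u) = c₂ u² + c₃ (−1)ⁿ u² − (c₄/2) u + c₅ (−1)ⁿ u. Equivalently, the Lie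 point symmetry algebra of the reduced YdKN equation is five-dimensional, spanned by X₁ = ∂_t, X₂ = u_n² ∂_{u_n}, X₃ = (−1)ⁿ u_n² ∂_{u_n}, X₄ = t∂_t − (1/2)u_n ∂_{u_n}, X₅ = (−1)ⁿ u_n ∂_{u_n}. -/
lemma ydkn_deriv_left (a b c : ℝ) (h : c - a ≠ 0) :
    deriv (fun z => ydknF z b c) a = b ^ 2 * c ^ 2 / (c - a) ^ 2 := by
  have h1 : HasDerivAt (fun z : ℝ => b ^ 2 * c * z) (b ^ 2 * c) a := by
    simpa using (hasDerivAt_id a).const_mul (b ^ 2 * c)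
  have h2 : HasDerivAt (fun z : ℝ => c - z) (-1) a := by
    simpa using (hasDerivAt_id a).const_sub c
  have h3 := h1.div h2 h
  rw [show (fun z => ydknF z b c) = ((fun z => b ^ 2 * c * z) / fun z => c - z) from rfl, h3.deriv]
  field_simp
  ring

lemma ydkn_deriv_mid (a b c : ℝ) :
    deriv (fun z => ydknF a z c) b = 2 * b * c * a / (c - a) := by
  have h1 : HasDerivAt (fun z : ℝ => z ^ 2 * c * a / (c - a))
      ((2 * b ^ 1) * c * a / (c - a)) b := by
    exact (((hasDerivAt_pow 2 b).mul_const c).mul_const a).div_const (c - a)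
  rw [show (fun z => ydknF a z c) = fun z => z ^ 2 * c * a / (c - a) from rfl, h1.deriv]
  ring

lemma ydkn_deriv_right (a b c : ℝ) (h : c - a ≠ 0) :
    deriv (fun z => ydknF a b z) c = -(b ^ 2 * a ^ 2) / (c - a) ^ 2 := by
  have h1 : HasDerivAt (fun z : ℝ => b ^ 2 * z * a) (b ^ 2 * a) c := by
    simpa using ((hasDerivAt_id c).const_mul (b ^ 2)).mul_const a
  have h2 : HasDerivAt (fun z : ℝ => z - a) 1 c := by
    simpa using (hasDerivAt_id c).sub_const a
  have h3 := h1.div h2 h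
  rw [show (fun z => ydknF a b z) = ((fun z => b ^ 2 * z * a) / fun z => z - a) from rfl, h3.deriv]
  field_simp
  ring

/-- simplified determining polynomial -/
noncomputable def ELHS (τ : ℝ → ℝ) (φ : ℤ → ℝ → ℝ → ℝ) (n : ℤ) (t x u y : ℝ) : ℝ :=
  u ^ 2 * y ^ 2 * φ (n - 1) t x + 2 * u * x * y * (y - x) * φ n t u
    - u ^ 2 * x ^ 2 * φ (n + 1) t y + deriv τ t * (u ^ 2 * x * y * (y - x))
    - (y - x) ^ 2 * deriv (fun s => φ n s u) t
    - deriv (fun z => φ n t z) u * (u ^ 2 * x * y * (y - x))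

lemma detEq_iff (τ : ℝ → ℝ) (φ : ℤ → ℝ → ℝ → ℝ) :
    YdKNDetEq τ φ ↔ ∀ (n : ℤ) (t x u y : ℝ), y - x ≠ 0 → ELHS τ φ n t x u y = 0 := by
  have mulid : ∀ (n : ℤ) (t x u y : ℝ), y - x ≠ 0 →
      (u ^ 2 * y ^ 2 / (y - x) ^ 2 * φ (n - 1) t x
        + 2 * u * y * x / (y - x) * φ n t u
        + -(u ^ 2 * x ^ 2) / (y - x) ^ 2 * φ (n + 1) t y
        + deriv τ t * (u ^ 2 * y * x / (y - x))
        - deriv (fun s => φ n s u) t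
        - deriv (fun z => φ n t z) u * (u ^ 2 * y * x / (y - x))) * (y - x) ^ 2
      = ELHS τ φ n t x u y := by
    intro n t x u y hyx
    simp only [ELHS]
    field_simp
    ring
  constructor
  · intro h n t x u y hyx
    have hd := h n t (u - 1) x u y (u + 1) hyx (by simp) (by simp)
    rw [ydkn_deriv_left x u y hyx, ydkn_deriv_mid x u y, ydkn_deriv_right x u y hyx] at hd
    have hd' : u ^ 2 * y ^ 2 / (y - x) ^ 2 * φ (n - 1) t x
        + 2 * u * y * x / (y - x) * φ n t u
        + -(u ^ 2 * x ^ 2) / (y - x) ^ 2 * φ (n + 1) t y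
        + deriv τ t * (u ^ 2 * y * x / (y - x))
        - deriv (fun s => φ n s u) t
        - deriv (fun z => φ n t z) u * (u ^ 2 * y * x / (y - x)) = 0 := by
      have e0 : ydknF x u y = u ^ 2 * y * x / (y - x) := rfl
      rw [e0] at hd
      linear_combination hd
    rw [← mulid n t x u y hyx, hd', zero_mul]
  · intro h n t um2 x u y up2 hyx h2 h3
    rw [ydkn_deriv_left x u y hyx, ydkn_deriv_mid x u y, ydkn_deriv_right x u y hyx]
    have hd' : u ^ 2 * y ^ 2 / (y - x) ^ 2 * φ (n - 1) t x
        + 2 * u * y * x / (y - x) * φ n t u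
        + -(u ^ 2 * x ^ 2) / (y - x) ^ 2 * φ (n + 1) t y
        + deriv τ t * (u ^ 2 * y * x / (y - x))
        - deriv (fun s => φ n s u) t
        - deriv (fun z => φ n t z) u * (u ^ 2 * y * x / (y - x)) = 0 := by
      have := mulid n t x u y hyx
      rw [h n t x u y hyx] at this
      exact (mul_eq_zero.mp this).resolve_right (pow_ne_zero 2 hyx)
    have e0 : ydknF x u y = u ^ 2 * y * x / (y - x) := rfl
    rw [e0]
    linear_combination hd'

section Forward

variable (τ : ℝ → ℝ) (φ : ℤ → ℝ → ℝ → ℝ)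

lemma E_all (hφ : ∀ n, ContDiff ℝ (⊤ : ℕ∞) (fun p : ℝ × ℝ => φ n p.1 p.2))
    (hdet : YdKNDetEq τ φ) :
    ∀ (n : ℤ) (t x u y : ℝ), ELHS τ φ n t x u y = 0 := by
  have hE := (detEq_iff τ φ).mp hdet
  intro n t x u y
  rcases ne_or_eq x y with hxy | hxy
  · exact hE n t x u y (sub_ne_zero.mpr (Ne.symm hxy))
  · have hcφ : Continuous fun x : ℝ => φ (n - 1) t x :=
      (hφ (n - 1)).continuous.comp (continuous_const.prodMk continuous_id)
    have hc : Continuous fun x : ℝ => ELHS τ φ n t x u y := by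
      simp only [ELHS]
      continuity
    have heq : (fun x : ℝ => ELHS τ φ n t x u y) = fun _ => 0 := by
      refine Continuous.ext_on (dense_compl_singleton y) hc continuous_const ?_
      intro z hz
      exact hE n t z u y (sub_ne_zero.mpr (Ne.symm hz))
    subst hxy
    exact congrFun heq x

/-- coefficients of the quadratic form of φ -/
noncomputable def cA (n : ℤ) (t : ℝ) : ℝ :=
  φ (n - 2) t 1 + (2 * φ (n - 1) t 1 + deriv τ t - deriv (fun z => φ (n - 1) t z) 1)
    - φ (n - 2) t 0

noncomputable def cB (n : ℤ) (t : ℝ) : ℝ :=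
  -(2 * φ (n - 1) t 1 + deriv τ t - deriv (fun z => φ (n - 1) t z) 1) + 2 * φ (n - 2) t 0

noncomputable def cC (n : ℤ) (t : ℝ) : ℝ := φ n t 0

variable {τ φ}

lemma dtphi (hE : ∀ (n : ℤ) (t x u y : ℝ), ELHS τ φ n t x u y = 0)
    (n : ℤ) (t u : ℝ) :
    deriv (fun s => φ n s u) t = u ^ 2 * cC φ (n - 1) t := by
  have h := hE n t 0 u 1
  simp only [ELHS] at h
  show deriv (fun s => φ n s u) t = u ^ 2 * φ (n - 1) t 0
  linear_combination -h

lemma quad' (hE : ∀ (n : ℤ) (t x u y : ℝ), ELHS τ φ n t x u y = 0)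
    (n : ℤ) (t y : ℝ) :
    φ n t y = cA τ φ n t * y ^ 2 + cB τ φ n t * y + cC φ n t := by
  have e1 : n - 1 + 1 = n := by ring
  have e2 : n - 1 - 1 = n - 2 := by ring
  have h := hE (n - 1) t 1 1 y
  have h0 := hE (n - 1) t 1 1 0
  simp only [ELHS, e1, e2] at h h0
  rw [dtphi hE (n - 1) t 1, e2] at h h0
  simp only [cC] at h h0
  simp only [cA, cB, cC]
  linear_combination -h + h0

lemma duphi (hE : ∀ (n : ℤ) (t x u y : ℝ), ELHS τ φ n t x u y = 0)
    (n : ℤ) (t u : ℝ) :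
    deriv (fun z => φ n t z) u = 2 * cA τ φ n t * u + cB τ φ n t := by
  have hq : (fun z => φ n t z)
      = fun z => cA τ φ n t * z ^ 2 + cB τ φ n t * z + cC φ n t :=
    funext fun z => quad' hE n t z
  have hd : HasDerivAt (fun z : ℝ => cA τ φ n t * z ^ 2 + cB τ φ n t * z + cC φ n t)
      (cA τ φ n t * ((2 : ℕ) * u ^ 1) + cB τ φ n t * 1) u :=
    (((hasDerivAt_pow 2 u).const_mul (cA τ φ n t)).add
      ((hasDerivAt_id u).const_mul (cB τ φ n t))).add_const (cC φ n t)
  rw [hq, hd.deriv]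
  push_cast
  ring

end Forward

section Rel

variable {τ : ℝ → ℝ} {φ : ℤ → ℝ → ℝ → ℝ}

lemma rel (hE : ∀ (n : ℤ) (t x u y : ℝ), ELHS τ φ n t x u y = 0) (n : ℤ) (t : ℝ) :
    cC φ n t = 0 ∧ cA τ φ (n + 1) t = cA τ φ (n - 1) t ∧
      cB τ φ n t + cB τ φ (n + 1) t + deriv τ t = 0 := by
  have h1 := hE n t 1 1 1
  have h2 := hE n t 1 1 2
  have h3 := hE n t 1 1 (-1)
  have h4 := hE n t 2 1 1
  have h5 := hE n t 2 1 2
  have h6 := hE n t 1 2 2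
  simp only [ELHS] at h1 h2 h3 h4 h5 h6
  rw [dtphi hE n t 1, duphi hE n t 1] at h1 h2 h3 h4 h5
  rw [dtphi hE n t 2, duphi hE n t 2] at h6
  simp only [quad' hE] at h1 h2 h3 h4 h5 h6
  refine ⟨?_, ?_, ?_⟩
  · linear_combination (1/2) * h2 - (1/8) * h6
  · linear_combination (-3/2) * h1 + (2/3) * h2 - (1/6) * h3 + (1/2) * h4 - (1/4) * h5
  · linear_combination (7/2) * h1 - 2 * h2 + (1/2) * h3 - h4 + (1/4) * h5 + (1/4) * h6
end Rel

lemma neg_one_zpow_add_one (m : ℤ) : (-1 : ℝ) ^ (m + 1) = -(-1 : ℝ) ^ m := by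
  rw [zpow_add_one₀ (by norm_num : (-1 : ℝ) ≠ 0)]; ring

lemma neg_one_zpow_sub_one (m : ℤ) : (-1 : ℝ) ^ (m - 1) = -(-1 : ℝ) ^ m := by
  rw [zpow_sub_one₀ (by norm_num : (-1 : ℝ) ≠ 0)]; norm_num

/-- Eq. (4.7): the Lie point symmetry algebra of the reduced YdKN equation
`u̇ₙ = uₙ² uₙ₊₁ uₙ₋₁/(uₙ₊₁ − uₙ₋₁)` is five-dimensional: the determining equation holds
identically if and only if `τ(t) = c₁ + c₄ t` and
`φₙ(t,u) = c₂u² + c₃(−1)ⁿu² − (c₄/2)u + c₅(−1)ⁿu`, i.e. the symmetries are spanned by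
`X₁ = ∂_t`, `X₂ = uₙ²∂_{uₙ}`, `X₃ = (−1)ⁿuₙ²∂_{uₙ}`, `X₄ = t∂_t − (1/2)uₙ∂_{uₙ}`,
`X₅ = (−1)ⁿuₙ∂_{uₙ}`. -/
theorem ydkn_symmetry_algebra
    (τ : ℝ → ℝ) (φ : ℤ → ℝ → ℝ → ℝ)
    (hτ : ContDiff ℝ (⊤ : ℕ∞) τ)
    (hφ : ∀ n, ContDiff ℝ (⊤ : ℕ∞) (fun p : ℝ × ℝ => φ n p.1 p.2)) :
    YdKNDetEq τ φ ↔
      ∃ c1 c2 c3 c4 c5 : ℝ,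
        (∀ t : ℝ, τ t = c1 + c4 * t) ∧
        (∀ (n : ℤ) (t u : ℝ), φ n t u =
          c2 * u ^ 2 + c3 * (-1 : ℝ) ^ n * u ^ 2 - c4 / 2 * u + c5 * (-1 : ℝ) ^ n * u) := by
  constructor
  · intro hdet
    have hE := E_all τ φ hφ hdet
    have hC : ∀ (n : ℤ) (t : ℝ), cC φ n t = 0 := fun n t => (rel hE n t).1
    have hA : ∀ (n : ℤ) (t : ℝ), cA τ φ (n + 1) t = cA τ φ (n - 1) t :=
      fun n t => (rel hE n t).2.1
    have hB : ∀ (n : ℤ) (t : ℝ), cB τ φ n t + cB τ φ (n + 1) t + deriv τ t = 0 :=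
      fun n t => (rel hE n t).2.2
    -- t-independence of φ
    have hconst : ∀ (n : ℤ) (u t : ℝ), φ n t u = φ n 0 u := by
      intro n u
      have hdiff : Differentiable ℝ (fun s => φ n s u) :=
        ((hφ n).comp (contDiff_id.prodMk contDiff_const)).differentiable (by simp)
      have hz : ∀ t, deriv (fun s => φ n s u) t = 0 := fun t => by
        rw [dtphi hE n t u, hC (n - 1) t, mul_zero]
      exact fun t => is_const_of_deriv_eq_zero hdiff hz t 0
    have hAc : ∀ (n : ℤ) (t : ℝ), cA τ φ n t = cA τ φ n 0 := by
      intro n t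
      have q1t := quad' hE n t 1
      have q2t := quad' hE n t 2
      have q10 := quad' hE n 0 1
      have q20 := quad' hE n 0 2
      have e1 := hconst n 1 t
      have e2 := hconst n 2 t
      have c1 := hC n t
      have c0 := hC n 0
      linarith
    have hBc : ∀ (n : ℤ) (t : ℝ), cB τ φ n t = cB τ φ n 0 := by
      intro n t
      have q1t := quad' hE n t 1
      have q2t := quad' hE n t 2
      have q10 := quad' hE n 0 1
      have q20 := quad' hE n 0 2
      have e1 := hconst n 1 t
      have e2 := hconst n 2 t
      have c1 := hC n t
      have c0 := hC n 0
      linarith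
    set c4 : ℝ := -(cB τ φ 0 0 + cB τ φ 1 0) with hc4
    have hτ' : ∀ t, deriv τ t = c4 := by
      intro t
      have h := hB 0 t
      norm_num at h
      have b0 := hBc 0 t
      have b1 := hBc 1 t
      rw [hc4]; linarith
    have hτaff : ∀ t, τ t = τ 0 + c4 * t := by
      have hdiff : Differentiable ℝ (fun s => τ s - c4 * s) :=
        (hτ.differentiable (by simp)).sub (differentiable_id.const_mul c4)
      have hz : ∀ s, deriv (fun s => τ s - c4 * s) s = 0 := by
        intro s
        have hds : HasDerivAt (fun s : ℝ => τ s - c4 * s) (deriv τ s - c4 * 1) s :=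
          ((hτ.differentiable (by simp) s).hasDerivAt).sub ((hasDerivAt_id s).const_mul c4)
        rw [hds.deriv, hτ' s]
        ring
      intro t
      have := is_const_of_deriv_eq_zero hdiff hz t 0
      simp only [mul_zero, sub_zero] at this
      linarith
    -- parity structure of cA
    have claimA : ∀ n : ℤ, cA τ φ n 0 =
        (cA τ φ 0 0 + cA τ φ 1 0) / 2 + (cA τ φ 0 0 - cA τ φ 1 0) / 2 * (-1 : ℝ) ^ n := by
      have key : ∀ n : ℤ,
          (cA τ φ n 0 = (cA τ φ 0 0 + cA τ φ 1 0) / 2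
            + (cA τ φ 0 0 - cA τ φ 1 0) / 2 * (-1 : ℝ) ^ n) ∧
          (cA τ φ (n + 1) 0 = (cA τ φ 0 0 + cA τ φ 1 0) / 2
            + (cA τ φ 0 0 - cA τ φ 1 0) / 2 * (-1 : ℝ) ^ (n + 1)) := by
        intro n
        induction n using Int.induction_on with
        | zero =>
          constructor
          · norm_num
            ring
          · norm_num
            ring
        | succ i ih =>
          refine ⟨ih.2, ?_⟩
          have h := hA (i + 1) 0
          have e : (i : ℤ) + 1 - 1 = i := by ring
          rw [e] at h
          have s1 := neg_one_zpow_add_one ((i : ℤ) + 1)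
          have s2 := neg_one_zpow_add_one (i : ℤ)
          linear_combination h + ih.1 - (cA τ φ 0 0 - cA τ φ 1 0) / 2 * s1
            + (cA τ φ 0 0 - cA τ φ 1 0) / 2 * s2
        | pred i ih =>
          have h := hA (-i) 0
          have s1 := neg_one_zpow_add_one (-(i : ℤ))
          have s2 := neg_one_zpow_sub_one (-(i : ℤ))
          constructor
          · linear_combination ih.2 - h + (cA τ φ 0 0 - cA τ φ 1 0) / 2 * s1
              - (cA τ φ 0 0 - cA τ φ 1 0) / 2 * s2
          · have e : -(i : ℤ) - 1 + 1 = -(i : ℤ) := by ring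
            rw [e]
            exact ih.1
      exact fun n => (key n).1
    -- parity structure of cB
    have hBrec : ∀ n : ℤ, cB τ φ (n + 1) 0 = -c4 - cB τ φ n 0 := by
      intro n
      have h := hB n 0
      rw [hτ' 0] at h
      linarith
    have claimB : ∀ n : ℤ, cB τ φ n 0 =
        -c4 / 2 + (cB τ φ 0 0 - cB τ φ 1 0) / 2 * (-1 : ℝ) ^ n := by
      have base : cB τ φ 0 0 - cB τ φ 1 0 = 2 * cB τ φ 0 0 + c4 := by
        have := hBrec 0
        norm_num at this
        linarith
      intro n
      induction n using Int.induction_on with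
      | zero => norm_num; linarith [base]
      | succ i ih =>
        have h := hBrec i
        have s2 := neg_one_zpow_add_one (i : ℤ)
        linear_combination h - ih - (cB τ φ 0 0 - cB τ φ 1 0) / 2 * s2
      | pred i ih =>
        have h := hBrec (-(i : ℤ) - 1)
        have e : -(i : ℤ) - 1 + 1 = -(i : ℤ) := by ring
        rw [e] at h
        have s2 := neg_one_zpow_sub_one (-(i : ℤ))
        linear_combination h - ih - (cB τ φ 0 0 - cB τ φ 1 0) / 2 * s2
    refine ⟨τ 0, (cA τ φ 0 0 + cA τ φ 1 0) / 2, (cA τ φ 0 0 - cA τ φ 1 0) / 2,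
      c4, (cB τ φ 0 0 - cB τ φ 1 0) / 2, hτaff, ?_⟩
    intro n t u
    have hq := quad' hE n t u
    rw [hC n t, hAc n t, hBc n t, claimA n, claimB n] at hq
    rw [hq]; ring
  · rintro ⟨c1, c2, c3, c4, c5, hτf, hφf⟩
    intro n t um2 x u y up2 h1 h2 h3
    rw [ydkn_deriv_left x u y h1, ydkn_deriv_mid x u y, ydkn_deriv_right x u y h1]
    have hdτ : deriv τ t = c4 := by
      have : τ = fun t => c1 + c4 * t := funext hτf
      rw [this]
      simpa using (((hasDerivAt_id t).const_mul c4).const_add c1).deriv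
    have hdt : deriv (fun s => φ n s u) t = 0 := by
      have : (fun s => φ n s u) = fun _ =>
          c2 * u ^ 2 + c3 * (-1 : ℝ) ^ n * u ^ 2 - c4 / 2 * u + c5 * (-1 : ℝ) ^ n * u :=
        funext fun s => hφf n s u
      rw [this, deriv_const]
    have hdu : deriv (fun z => φ n t z) u
        = 2 * c2 * u + 2 * (c3 * (-1 : ℝ) ^ n) * u - c4 / 2 + c5 * (-1 : ℝ) ^ n := by
      have hfe : (fun z => φ n t z) = fun z =>
          c2 * z ^ 2 + c3 * (-1 : ℝ) ^ n * z ^ 2 - c4 / 2 * z + c5 * (-1 : ℝ) ^ n * z :=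
        funext fun z => hφf n t z
      have hd : HasDerivAt (fun z : ℝ =>
          c2 * z ^ 2 + c3 * (-1 : ℝ) ^ n * z ^ 2 - c4 / 2 * z + c5 * (-1 : ℝ) ^ n * z)
          ((c2 * ((2 : ℕ) * u ^ 1) + (c3 * (-1 : ℝ) ^ n) * ((2 : ℕ) * u ^ 1)
            - (c4 / 2) * 1) + (c5 * (-1 : ℝ) ^ n) * 1) u := by
        exact ((((hasDerivAt_pow 2 u).const_mul c2).add
          ((hasDerivAt_pow 2 u).const_mul (c3 * (-1 : ℝ) ^ n))).sub
          ((hasDerivAt_id u).const_mul (c4 / 2))).add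
          ((hasDerivAt_id u).const_mul (c5 * (-1 : ℝ) ^ n))
      rw [hfe, hd.deriv]
      push_cast
      ring
    have em : (-1 : ℝ) ^ (n - 1) = -(-1 : ℝ) ^ n := neg_one_zpow_sub_one n
    have ep : (-1 : ℝ) ^ (n + 1) = -(-1 : ℝ) ^ n := neg_one_zpow_add_one n
    rw [hdτ, hdt, hdu, hφf (n - 1) t x, hφf n t u, hφf (n + 1) t y, em, ep]
    simp only [ydknF]
    field_simp
    ring
end

section
/- Let u : ℤ × ℝ → ℝ, (n,t) ↦ u_n(t), with each u_n differentiable, be a solution of the reduced YdKN equation: for all n ∈ ℤ and t ∈ ℝ, u_{n+1}(t) ≠ u_{n-1}(t) and u_n'(t) = u_n(t)² u_{n+1}(t) u_{n-1}(t)/(u_{n+1}(t) − u_{n-1}(t)). Let λ ∈ ℝ be such that 1 − λ u_n(t) ≠ 0 for all n ∈ ℤ, t ∈ ℝ. Then v_n(t) := u_n(t)/(1 − λ u_n(t)) is again a solution: for all n and t, v_{n+1}(t) ≠ v_{n-1}(t) and v_n'(t) = v_n(t)² v_{n+1}(t) v_{n-1}(t)/(v_{n+1}(t) − v_{n-1}(t)).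 -/
/-!
The flow of `X₂ = u²∂_u` is the Möbius map `g_λ(x) = x/(1 - λx)`, with `g_λ'(x) = (1 - λx)⁻²` and
`g_λ(y) - g_λ(z) = (y - z)/((1 - λy)(1 - λz))`. Hence the right-hand side `F(x, y, z) = x²yz/(y - z)`
of the equation satisfies `F(g_λ x, g_λ y, g_λ z) = g_λ'(x) F(x, y, z)`, which is exactly the rule by
which `d/dt` transforms under `v = g_λ(u)`.
-/

namespace YdKN

/-- The time-`λ` flow of the vector field `x²∂ₓ`. -/
def x2Flow {K : Type*} [Field K] (lam x : K) : K := x / (1 - lam * x)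

/-- The right-hand side of the reduced YdKN equation `u̇ₙ = F(uₙ, uₙ₊₁, uₙ₋₁)`. -/
def rhs {K : Type*} [Field K] (x y z : K) : K := x ^ 2 * y * z / (y - z)

section Algebra

variable {K : Type*} [Field K] {lam x y z : K}

theorem x2Flow_sub_x2Flow (hy : 1 - lam * y ≠ 0) (hz : 1 - lam * z ≠ 0) :
    x2Flow lam y - x2Flow lam z = (y - z) / ((1 - lam * y) * (1 - lam * z)) := by
  rw [x2Flow, x2Flow, div_sub_div _ _ hy hz]
  ring

theorem x2Flow_ne_x2Flow (hy : 1 - lam * y ≠ 0) (hz : 1 - lam * z ≠ 0) (hyz : y ≠ z) :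
    x2Flow lam y ≠ x2Flow lam z := by
  rw [← sub_ne_zero, x2Flow_sub_x2Flow hy hz]
  exact div_ne_zero (sub_ne_zero.mpr hyz) (mul_ne_zero hy hz)

theorem rhs_x2Flow (hy : 1 - lam * y ≠ 0) (hz : 1 - lam * z ≠ 0) :
    rhs (x2Flow lam x) (x2Flow lam y) (x2Flow lam z) = rhs x y z / (1 - lam * x) ^ 2 := by
  rw [rhs, rhs, x2Flow_sub_x2Flow hy hz]
  simp only [x2Flow]
  field_simp

end Algebra

theorem HasDerivAt.x2Flow {𝕜 : Type*} [NontriviallyNormedField 𝕜] {f : 𝕜 → 𝕜} {f' t : 𝕜}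
    (lam : 𝕜) (hf : HasDerivAt f f' t) (ht : 1 - lam * f t ≠ 0) :
    HasDerivAt (fun s => x2Flow lam (f s)) (f' / (1 - lam * f t) ^ 2) t := by
  have hden : HasDerivAt (fun s => 1 - lam * f s) (-(lam * f')) t := by
    simpa using (hf.const_mul lam).const_sub 1
  exact (hf.div hden ht).congr_deriv (by ring)

end YdKN

open YdKN in
/-- The symmetry group generated by `X₂ = uₙ²∂_{uₙ}` maps solutions of the reduced YdKN
equation `u̇ₙ = uₙ² uₙ₊₁ uₙ₋₁/(uₙ₊₁ − uₙ₋₁)` to solutions: if `uₙ(t)` is a solution and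
`1 − λuₙ(t)` never vanishes, then `vₙ(t) = uₙ(t)/(1 − λuₙ(t))` is again a solution. -/
theorem ydkn_symmetry_X2 (u : ℤ → ℝ → ℝ) (hu : ∀ n, Differentiable ℝ (u n))
    (hsol : ∀ (n : ℤ) (t : ℝ), u (n + 1) t ≠ u (n - 1) t ∧
      deriv (u n) t =
        (u n t) ^ 2 * u (n + 1) t * u (n - 1) t / (u (n + 1) t - u (n - 1) t))
    (lam : ℝ) (hlam : ∀ (n : ℤ) (t : ℝ), 1 - lam * u n t ≠ 0) :
    ∀ (n : ℤ) (t : ℝ),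
      let v : ℤ → ℝ → ℝ := fun m s => u m s / (1 - lam * u m s)
      v (n + 1) t ≠ v (n - 1) t ∧
        deriv (v n) t =
          (v n t) ^ 2 * v (n + 1) t * v (n - 1) t / (v (n + 1) t - v (n - 1) t) := by
  intro n t v
  obtain ⟨hne, hder⟩ := hsol n t
  refine ⟨x2Flow_ne_x2Flow (hlam _ t) (hlam _ t) hne, ?_⟩
  change deriv (fun s => x2Flow lam (u n s)) t =
    rhs (x2Flow lam (u n t)) (x2Flow lam (u (n + 1) t)) (x2Flow lam (u (n - 1) t))
  rw [((hu n t).hasDerivAt.x2Flow lam (hlam n t)).deriv, hder, rhs_x2Flow (hlam _ t) (hlam _ t), rhs]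
end

section
/- Let u : ℤ × ℝ → ℝ, (n,t) ↦ u_n(t), with each u_n differentiable, be a solution of the reduced YdKN equation: for all n ∈ ℤ and t ∈ ℝ, u_{n+1}(t) ≠ u_{n-1}(t) and u_n'(t) = u_n(t)² u_{n+1}(t) u_{n-1}(t)/(u_{n+1}(t) − u_{n-1}(t)). Let λ ∈ ℝ be such that 1 − (−1)ⁿ λ u_n(t) ≠ 0 for all n ∈ ℤ, t ∈ ℝ. Then v_n(t) := u_n(t)/(1 − (−1)ⁿ λ u_n(t)) is again a solution: for all n and t, v_{n+1}(t) ≠ v_{n-1}(t) and v_n'(t) = v_n(t)² v_{n+1}(t) v_{n-1}(t)/(v_{n+1}(t) − v_{n-1}(t)). -/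
/-!
The map `x ↦ x / (1 - c x)` leaves the expression `a b / (a - b)` unchanged when it is applied
to both `a` and `b` with the same `c`, and it multiplies derivatives by `1 / (1 - c x)²`, just as
it multiplies `x²` by `1 / (1 - c x)²`. In the YdKN equation the neighbours `n ± 1` carry the
same sign `(-1)ⁿ⁺¹`, so the right-hand side transforms exactly like the left-hand side.
-/

section Field

variable {K : Type*} [Field K]

lemma div_one_sub_mul_sub_div_one_sub_mul {c a b : K} (ha : 1 - c * a ≠ 0)
    (hb : 1 - c * b ≠ 0) :
    a / (1 - c * a) - b / (1 - c * b) = (a - b) / ((1 - c * a) * (1 - c * b)) := by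
  rw [div_sub_div _ _ ha hb]
  ring

lemma div_one_sub_mul_ne_div_one_sub_mul {c a b : K} (ha : 1 - c * a ≠ 0) (hb : 1 - c * b ≠ 0)
    (hab : a ≠ b) : a / (1 - c * a) ≠ b / (1 - c * b) := by
  rw [← sub_ne_zero, div_one_sub_mul_sub_div_one_sub_mul ha hb]
  exact div_ne_zero (sub_ne_zero.mpr hab) (mul_ne_zero ha hb)

lemma div_one_sub_mul_mul_div_sub {c a b : K} (ha : 1 - c * a ≠ 0) (hb : 1 - c * b ≠ 0) :
    a / (1 - c * a) * (b / (1 - c * b)) / (a / (1 - c * a) - b / (1 - c * b)) =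
      a * b / (a - b) := by
  rw [div_one_sub_mul_sub_div_one_sub_mul ha hb, div_mul_div_comm, div_div_div_cancel_right₀
    (mul_ne_zero ha hb)]

end Field

lemma HasDerivAt.div_one_sub_mul {𝕜 : Type*} [NontriviallyNormedField 𝕜] {f : 𝕜 → 𝕜}
    {f' c t : 𝕜} (hf : HasDerivAt f f' t) (hden : 1 - c * f t ≠ 0) :
    HasDerivAt (fun s => f s / (1 - c * f s)) (f' / (1 - c * f t) ^ 2) t := by
  refine (hf.fun_div ((hf.const_mul c).const_sub 1) hden).congr_deriv ?_
  ring

lemma neg_one_zpow_sub_one_eq_add_one {R : Type*} [DivisionRing R] (n : ℤ) :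
    (-1 : R) ^ (n - 1) = (-1) ^ (n + 1) := by
  rw [show n + 1 = n - 1 + 2 by ring, zpow_add₀ (neg_ne_zero.mpr one_ne_zero)]
  norm_num

/-- The symmetry group generated by `X₃ = (−1)ⁿuₙ²∂_{uₙ}` maps solutions of the reduced YdKN
equation `u̇ₙ = uₙ² uₙ₊₁ uₙ₋₁/(uₙ₊₁ − uₙ₋₁)` to solutions: if `uₙ(t)` is a solution and
`1 − (−1)ⁿλuₙ(t)` never vanishes, then `vₙ(t) = uₙ(t)/(1 − (−1)ⁿλuₙ(t))` is again a solution. -/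
theorem ydkn_symmetry_X3 (u : ℤ → ℝ → ℝ) (hu : ∀ n, Differentiable ℝ (u n))
    (hsol : ∀ (n : ℤ) (t : ℝ), u (n + 1) t ≠ u (n - 1) t ∧
      deriv (u n) t =
        (u n t) ^ 2 * u (n + 1) t * u (n - 1) t / (u (n + 1) t - u (n - 1) t))
    (lam : ℝ) (hlam : ∀ (n : ℤ) (t : ℝ), 1 - (-1 : ℝ) ^ n * lam * u n t ≠ 0) :
    ∀ (n : ℤ) (t : ℝ),
      let v : ℤ → ℝ → ℝ := fun m s => u m s / (1 - (-1 : ℝ) ^ m * lam * u m s)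
      v (n + 1) t ≠ v (n - 1) t ∧
        deriv (v n) t =
          (v n t) ^ 2 * v (n + 1) t * v (n - 1) t / (v (n + 1) t - v (n - 1) t) := by
  intro n t v
  obtain ⟨hne, hder⟩ := hsol n t
  have hsucc := hlam (n + 1) t
  have hpred := hlam (n - 1) t
  rw [neg_one_zpow_sub_one_eq_add_one] at hpred
  have hv_pred : v (n - 1) t = u (n - 1) t / (1 - (-1 : ℝ) ^ (n + 1) * lam * u (n - 1) t) := by
    simp only [v, neg_one_zpow_sub_one_eq_add_one]
  have hv_deriv : deriv (v n) t = deriv (u n) t / (1 - (-1 : ℝ) ^ n * lam * u n t) ^ 2 :=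
    ((hu n t).hasDerivAt.div_one_sub_mul (hlam n t)).deriv
  refine ⟨hv_pred ▸ div_one_sub_mul_ne_div_one_sub_mul hsucc hpred hne, ?_⟩
  rw [hv_deriv, hder, hv_pred, mul_assoc _ (v (n + 1) t), mul_div_assoc (v n t ^ 2),
    div_one_sub_mul_mul_div_sub hsucc hpred]
  simp only [v, div_pow]
  ring
end

section
/- Let u : ℤ × ℝ → ℝ, (n,t) ↦ u_n(t), with each u_n differentiable, be a solution of the reduced YdKN equation: for all n ∈ ℤ and t ∈ ℝ, u_{n+1}(t) ≠ u_{n-1}(t) and u_n'(t) = u_n(t)² u_{n+1}(t) u_{n-1}(t)/(u_{n+1}(t) − u_{n-1}(t)). Then for every λ ∈ ℝ the function v_n(t) := e^{(−1)ⁿλ} u_n(t) is again a solution: for all n and t, v_{n+1}(t) ≠ v_{n-1}(t) and v_n'(t) = v_n(t)² v_{n+1}(t) v_{n-1}(t)/(v_{n+1}(t) − v_{n-1}(t)). -/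
/-!
The right-hand side `a² b c / (b − c)` of the reduced YdKN equation is multiplied by `k` when
`a` is scaled by `k` and its two neighbours `b, c` by `k⁻¹`. Hence any rescaling `uₙ ↦ cₙ uₙ`
with `cₙ₊₁ cₙ = 1` maps solutions to solutions, and `cₙ = e^{(−1)ⁿλ}` is such a rescaling.
-/

def IsYdKNSolution (u : ℤ → ℝ → ℝ) : Prop :=
  ∀ (n : ℤ) (t : ℝ), u (n + 1) t ≠ u (n - 1) t ∧
    deriv (u n) t = (u n t) ^ 2 * u (n + 1) t * u (n - 1) t / (u (n + 1) t - u (n - 1) t)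

theorem ydkn_rhs_scale (k a b c : ℝ) :
    (k * a) ^ 2 * (k⁻¹ * b) * (k⁻¹ * c) / (k⁻¹ * b - k⁻¹ * c) =
      k * (a ^ 2 * b * c / (b - c)) := by
  rcases eq_or_ne k 0 with rfl | hk
  · simp
  · rw [← mul_sub]
    field_simp

theorem IsYdKNSolution.mul_alternating {u : ℤ → ℝ → ℝ} (hu : IsYdKNSolution u)
    {c : ℤ → ℝ} (hc : ∀ n, c (n + 1) * c n = 1) :
    IsYdKNSolution fun m s => c m * u m s := by
  intro n t
  have hsucc : c (n + 1) = (c n)⁻¹ := eq_inv_of_mul_eq_one_left (hc n)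
  have hpred : c (n - 1) = (c n)⁻¹ :=
    eq_inv_of_mul_eq_one_right (by simpa using hc (n - 1))
  have hcn : c n ≠ 0 := right_ne_zero_of_mul_eq_one (hc n)
  obtain ⟨hne, hderiv⟩ := hu n t
  simp only [hsucc, hpred, deriv_const_mul_field, hderiv, ydkn_rhs_scale]
  exact ⟨(mul_right_injective₀ (inv_ne_zero hcn)).ne hne, trivial⟩

theorem ydkn_symmetry_X5_general (u : ℤ → ℝ → ℝ)
    (hsol : ∀ (n : ℤ) (t : ℝ), u (n + 1) t ≠ u (n - 1) t ∧
      deriv (u n) t =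
        (u n t) ^ 2 * u (n + 1) t * u (n - 1) t / (u (n + 1) t - u (n - 1) t)) :
    ∀ (lam : ℝ) (n : ℤ) (t : ℝ),
      let v : ℤ → ℝ → ℝ := fun m s => Real.exp ((-1 : ℝ) ^ m * lam) * u m s
      v (n + 1) t ≠ v (n - 1) t ∧
        deriv (v n) t =
          (v n t) ^ 2 * v (n + 1) t * v (n - 1) t / (v (n + 1) t - v (n - 1) t) := by
  intro lam
  refine IsYdKNSolution.mul_alternating (c := fun m => Real.exp ((-1 : ℝ) ^ m * lam)) hsol
    fun n => ?_
  rw [← Real.exp_add, Real.exp_eq_one_iff, zpow_add_one₀ (by norm_num)]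
  ring

/-- The symmetry group generated by `X₅ = (−1)ⁿuₙ∂_{uₙ}` maps solutions of the reduced
YdKN equation `u̇ₙ = uₙ² uₙ₊₁ uₙ₋₁/(uₙ₊₁ − uₙ₋₁)` to solutions: if `uₙ(t)` is a solution
then, for every `λ`, `vₙ(t) = e^{(−1)ⁿλ} uₙ(t)` is again a solution. -/
theorem ydkn_symmetry_X5 (u : ℤ → ℝ → ℝ) (hu : ∀ n, Differentiable ℝ (u n))
    (hsol : ∀ (n : ℤ) (t : ℝ), u (n + 1) t ≠ u (n - 1) t ∧
      deriv (u n) t =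
        (u n t) ^ 2 * u (n + 1) t * u (n - 1) t / (u (n + 1) t - u (n - 1) t)) :
    ∀ (lam : ℝ) (n : ℤ) (t : ℝ),
      let v : ℤ → ℝ → ℝ := fun m s => Real.exp ((-1 : ℝ) ^ m * lam) * u m s
      v (n + 1) t ≠ v (n - 1) t ∧
        deriv (v n) t =
          (v n t) ^ 2 * v (n + 1) t * v (n - 1) t / (v (n + 1) t - v (n - 1) t) :=
  ydkn_symmetry_X5_general u hsol
end

section
/- Let u : ℤ × ℝ × ℝ → ℝ, (n,x,y) ↦ u_n(x,y), with each u_n twice continuously differentiable, be a solution of the two-dimensional Toda lattice: for all n ∈ ℤ and (x,y) ∈ ℝ², ∂²u_n/∂x∂y = exp(u_{n-1} − u_n) − exp(u_n − u_{n+1}). Let G : ℝ → ℝ be twice continuously differentiable with G'(x) > 0 for all x. Then v_n(x,y) := u_n(G(x), y) − n·log G'(x) is again a solution: ∂²v_n/∂x∂y = exp(v_{n-1} − v_n) − exp(v_n − v_{n+1}) for all n ∈ ℤ, (x,y) ∈ ℝ². -/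
open Real

section MixedPartials

variable {E : Type*} [NormedAddCommGroup E] [NormedSpace ℝ E]

theorem deriv_snd_eq_fderiv_apply {f : ℝ × ℝ → E} {s y : ℝ} (hf : DifferentiableAt ℝ f (s, y)) :
    deriv (fun r => f (s, r)) y = fderiv ℝ f (s, y) (0, 1) :=
  (hf.hasFDerivAt.comp_hasDerivAt y ((hasDerivAt_const y s).prodMk (hasDerivAt_id y))).deriv

theorem differentiable_deriv_snd_of_contDiff_two {u : ℝ → ℝ → E}
    (hu : ContDiff ℝ 2 (fun p : ℝ × ℝ => u p.1 p.2)) (y : ℝ) :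
    Differentiable ℝ (fun s => deriv (fun r => u s r) y) := by
  have hpartial :
      ContDiff ℝ 1 (fun p : ℝ × ℝ => fderiv ℝ (fun p : ℝ × ℝ => u p.1 p.2) p (0, 1)) :=
    (hu.fderiv_right one_add_one_eq_two.le).clm_apply contDiff_const
  have hline : Differentiable ℝ (fun s : ℝ => (s, y)) :=
    differentiable_id.prodMk (differentiable_const y)
  have hcoord : (fun s => deriv (fun r => u s r) y) =
      fun s => fderiv ℝ (fun p : ℝ × ℝ => u p.1 p.2) (s, y) (0, 1) := by
    funext s
    exact deriv_snd_eq_fderiv_apply (f := fun p : ℝ × ℝ => u p.1 p.2)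
      ((hu.differentiable two_ne_zero) (s, y))
  rw [hcoord]
  exact (hpartial.differentiable one_ne_zero).comp hline

theorem deriv_deriv_comp_fst_sub {u : ℝ → ℝ → E} {G : ℝ → ℝ} {c : ℝ → E} {x y : ℝ}
    (hu : DifferentiableAt ℝ (fun s => deriv (fun r => u s r) y) (G x))
    (hG : DifferentiableAt ℝ G x) :
    deriv (fun s => deriv (fun r => u (G s) r - c s) y) x =
      deriv G x • deriv (fun s => deriv (fun r => u s r) y) (G x) := by
  simp only [deriv_sub_const]
  exact (hu.hasDerivAt.scomp x hG.hasDerivAt).deriv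

end MixedPartials

/-- The symmetry group generated by `X(f) = f(x)∂ₓ + f'(x)n∂_{uₙ}` maps solutions of the
two-dimensional Toda lattice `u_{n,xy} = exp(uₙ₋₁ − uₙ) − exp(uₙ − uₙ₊₁)` to solutions:
if `uₙ(x,y)` is a solution and `G` is an increasing `C²` change of the variable `x`, then
`vₙ(x,y) = uₙ(G(x),y) − n log G'(x)` is again a solution. -/
theorem toda2d_symmetry_Xf (u : ℤ → ℝ → ℝ → ℝ)
    (hu : ∀ n, ContDiff ℝ 2 (fun p : ℝ × ℝ => u n p.1 p.2))
    (hsol : ∀ (n : ℤ) (x y : ℝ),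
      deriv (fun s => deriv (fun r => u n s r) y) x =
        Real.exp (u (n - 1) x y - u n x y) - Real.exp (u n x y - u (n + 1) x y))
    (G : ℝ → ℝ) (hG : ContDiff ℝ 2 G) (hG' : ∀ x, 0 < deriv G x) :
    ∀ (n : ℤ) (x y : ℝ),
      let v : ℤ → ℝ → ℝ → ℝ := fun m s r => u m (G s) r - (m : ℝ) * Real.log (deriv G s)
      deriv (fun s => deriv (fun r => v n s r) y) x =
        Real.exp (v (n - 1) x y - v n x y) - Real.exp (v n x y - v (n + 1) x y) := by
  intro n x y v
  have hlhs : deriv (fun s => deriv (fun r => v n s r) y) x =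
      deriv G x * deriv (fun s => deriv (fun r => u n s r) y) (G x) :=
    deriv_deriv_comp_fst_sub (differentiable_deriv_snd_of_contDiff_two (hu n) y (G x))
      ((hG.differentiable two_ne_zero) x)
  -- each exponential gains the factor `G' x` produced on the left by the chain rule
  have hdiff : ∀ m : ℤ, v (m - 1) x y - v m x y =
      u (m - 1) (G x) y - u m (G x) y + log (deriv G x) := by
    intro m; simp only [v]; push_cast; ring
  have hdiff' := hdiff (n + 1)
  rw [add_sub_cancel_right] at hdiff'
  rw [hlhs, hsol, hdiff, hdiff', exp_add, exp_add, exp_log (hG' x)]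
  ring
end

section
/- Let u : ℤ × ℝ × ℝ → ℝ, (n,x,y) ↦ u_n(x,y), with each u_n twice continuously differentiable, be a solution of the two-dimensional Toda lattice: for all n ∈ ℤ and (x,y) ∈ ℝ², ∂²u_n/∂x∂y = exp(u_{n-1} − u_n) − exp(u_n − u_{n+1}). Let H : ℝ → ℝ be twice continuously differentiable with H'(y) > 0 for all y. Then v_n(x,y) := u_n(x, H(y)) − n·log H'(y) is again a solution: ∂²v_n/∂x∂y = exp(v_{n-1} − v_n) − exp(v_n − v_{n+1}) for all n ∈ ℤ, (x,y) ∈ ℝ². -/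
/-!
By the chain rule `∂ₓ∂ᵧ vₙ(x, y) = H'(y) · ∂ₓ∂ᵧ uₙ(x, H y)`: the term `n log H'(y)` does
not depend on `x` and is killed by `∂ₓ`. On the right-hand side each difference `vₙ₋₁ − vₙ`
equals `uₙ₋₁ − uₙ` at `(x, H y)` plus `log H'(y)`, so each exponential acquires the same
factor `H'(y)`.
-/

open Real

theorem DifferentiableAt.curry_right {𝕜 E F G : Type*} [NontriviallyNormedField 𝕜]
    [NormedAddCommGroup E] [NormedSpace 𝕜 E] [NormedAddCommGroup F] [NormedSpace 𝕜 F]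
    [NormedAddCommGroup G] [NormedSpace 𝕜 G] {f : E → F → G} {s : E} {r : F}
    (hf : DifferentiableAt 𝕜 (fun p : E × F => f p.1 p.2) (s, r)) :
    DifferentiableAt 𝕜 (f s) r :=
  hf.comp r ((differentiableAt_const s).prodMk differentiableAt_id)

theorem deriv_comp_sub {f g H : ℝ → ℝ} {y : ℝ} (hf : DifferentiableAt ℝ f (H y))
    (hH : DifferentiableAt ℝ H y) (hg : DifferentiableAt ℝ g y) :
    deriv (fun r => f (H r) - g r) y = deriv f (H y) * deriv H y - deriv g y :=
  ((hf.hasDerivAt.comp y hH.hasDerivAt).sub hg.hasDerivAt).deriv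

theorem deriv_deriv_comp_sub {f : ℝ → ℝ → ℝ} {g H : ℝ → ℝ} {x y : ℝ}
    (hf : ∀ s, DifferentiableAt ℝ (f s) (H y)) (hH : DifferentiableAt ℝ H y)
    (hg : DifferentiableAt ℝ g y) :
    deriv (fun s => deriv (fun r => f s (H r) - g r) y) x =
      deriv (fun s => deriv (f s) (H y)) x * deriv H y := by
  simp only [deriv_comp_sub (hf _) hH hg, deriv_sub_const, deriv_mul_const_field]

/-- The symmetry group generated by `Y(g) = g(y)∂_y + g'(y)n∂_{uₙ}` maps solutions of the
two-dimensional Toda lattice `u_{n,xy} = exp(uₙ₋₁ − uₙ) − exp(uₙ − uₙ₊₁)` to solutions: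
if `uₙ(x,y)` is a solution and `H` is an increasing `C²` change of the variable `y`, then
`vₙ(x,y) = uₙ(x,H(y)) − n log H'(y)` is again a solution. -/
theorem toda2d_symmetry_Yg (u : ℤ → ℝ → ℝ → ℝ)
    (hu : ∀ n, ContDiff ℝ 2 (fun p : ℝ × ℝ => u n p.1 p.2))
    (hsol : ∀ (n : ℤ) (x y : ℝ),
      deriv (fun s => deriv (fun r => u n s r) y) x =
        Real.exp (u (n - 1) x y - u n x y) - Real.exp (u n x y - u (n + 1) x y))
    (H : ℝ → ℝ) (hH : ContDiff ℝ 2 H) (hH' : ∀ y, 0 < deriv H y) :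
    ∀ (n : ℤ) (x y : ℝ),
      let v : ℤ → ℝ → ℝ → ℝ := fun m s r => u m s (H r) - (m : ℝ) * Real.log (deriv H r)
      deriv (fun s => deriv (fun r => v n s r) y) x =
        Real.exp (v (n - 1) x y - v n x y) - Real.exp (v n x y - v (n + 1) x y) := by
  intro n x y v
  have hgap : ∀ m : ℤ, v m x y - v (m + 1) x y =
      u m x (H y) - u (m + 1) x (H y) + log (deriv H y) := by
    intro m
    simp only [v]
    push_cast
    ring
  have hgap' := hgap (n - 1)
  rw [sub_add_cancel] at hgap'
  have hlog : DifferentiableAt ℝ (fun r => (n : ℝ) * log (deriv H r)) y :=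
    ((hH.differentiable_deriv_two y).log (hH' y).ne').const_mul _
  calc deriv (fun s => deriv (fun r => v n s r) y) x
      = deriv (fun s => deriv (u n s) (H y)) x * deriv H y :=
        deriv_deriv_comp_sub (fun s => ((hu n).differentiable two_ne_zero _).curry_right)
          (hH.differentiable two_ne_zero y) hlog
    _ = _ := by
      rw [hsol, hgap', hgap, exp_add, exp_add, exp_log (hH' y)]
      ring
end
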